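/- arXiv:1402.4050 — 8 statements merged into one kernel-verified Lean document; each statement's English description precedes it below -/
import Mathlib

section
/- Let G be a graph with an even number n of vertices in which every vertex has degree at least n−2. Then in majority dynamics, starting from any profile in which at least n/2 + 1 vertices have preference 0, no vertex with preference 0 is unhappy; hence G is not mbM. -/
open Finset

variable {V : Type*}

/-- Number of neighbors of `x` inside the set `A`. -/
def nbrCount [Fintype V] [DecidableEq V] (G : SimpleGraph V) [DecidableRel G.Adj]
    (x : V) (A : Finset V) : ℕ :=
  (A.filter (fun y => G.Adj x y)).card

/-- The width of the partition `(S, Sᶜ)`: the number of crossing edges. -/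
def bwidth [Fintype V] [DecidableEq V] (G : SimpleGraph V) [DecidableRel G.Adj]
    (S : Finset V) : ℕ :=
  ∑ x ∈ S, nbrCount G x Sᶜ

/-- Deficiency of a vertex with respect to the partition `(S, Sᶜ)`. -/
def defic [Fintype V] [DecidableEq V] (G : SimpleGraph V) [DecidableRel G.Adj]
    (S : Finset V) (x : V) : ℤ :=
  if x ∈ S then (nbrCount G x S : ℤ) - (nbrCount G x Sᶜ : ℤ)
  else (nbrCount G x Sᶜ : ℤ) - (nbrCount G x S : ℤ)

/-- `(S, Sᶜ)` is a minimum bisection: `|S| = ⌈n/2⌉` and the width is minimal among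
all such partitions. -/
def IsMinBisection [Fintype V] [DecidableEq V] (G : SimpleGraph V) [DecidableRel G.Adj]
    (S : Finset V) : Prop :=
  S.card = (Fintype.card V + 1) / 2 ∧
  ∀ T : Finset V, T.card = S.card → bwidth G S ≤ bwidth G T

/-- A vertex is unhappy if a strict majority of its neighbors hold the opposite preference. -/
def Unhappy [Fintype V] [DecidableEq V] (G : SimpleGraph V) [DecidableRel G.Adj]
    (s : V → Bool) (x : V) : Prop :=
  (univ.filter (fun y => G.Adj x y ∧ s y = s x)).card <
  (univ.filter (fun y => G.Adj x y ∧ s y ≠ s x)).card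

/-- One update step of the majority dynamics: an unhappy vertex flips its preference. -/
def FlipStep [Fintype V] [DecidableEq V] (G : SimpleGraph V) [DecidableRel G.Adj]
    (s t : V → Bool) : Prop :=
  ∃ x, Unhappy G s x ∧ t = Function.update s x (!s x)

/-- Reachability by a (possibly empty) sequence of updates. -/
def ReachesProf [Fintype V] [DecidableEq V] (G : SimpleGraph V) [DecidableRel G.Adj]
    (s t : V → Bool) : Prop :=
  Relation.ReflTransGen (FlipStep G) s t

/-- A profile is stable if no vertex is unhappy. -/
def StableProf [Fintype V] [DecidableEq V] (G : SimpleGraph V) [DecidableRel G.Adj]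
    (s : V → Bool) : Prop :=
  ∀ x, ¬ Unhappy G s x

/-- Number of vertices with preference 1. -/
def onesCount [Fintype V] (s : V → Bool) : ℕ :=
  (univ.filter (fun x => s x = true)).card

/-- Number of vertices with preference 0. -/
def zerosCount [Fintype V] (s : V → Bool) : ℕ :=
  (univ.filter (fun x => s x = false)).card

/-- Minority becomes majority: there is an initial profile with a strict majority of
0-preferences and a sequence of updates reaching a stable profile in which at most half
of the vertices prefer 0. -/
def MbM [Fintype V] [DecidableEq V] (G : SimpleGraph V) [DecidableRel G.Adj] : Prop :=
  ∃ s₀ : V → Bool, 2 * zerosCount s₀ > Fintype.card V ∧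
    ∃ t, ReachesProf G s₀ t ∧ StableProf G t ∧ 2 * zerosCount t ≤ Fintype.card V

/-- an even-order graph with minimum degree ≥ n−2: from any profile with
at least n/2 + 1 zeros no vertex with preference 0 is unhappy; hence G is not mbM. -/
theorem stmt6 [Fintype V] [DecidableEq V] (G : SimpleGraph V) [DecidableRel G.Adj]
    (heven : Even (Fintype.card V))
    (hdeg : ∀ x : V, Fintype.card V - 2 ≤ G.degree x) :
    (∀ s : V → Bool, Fintype.card V / 2 + 1 ≤ zerosCount s →
        ∀ x, s x = false → ¬ Unhappy G s x) ∧
    ¬ MbM G := by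
  obtain ⟨k, hk⟩ := heven
  have key : ∀ s : V → Bool, Fintype.card V / 2 + 1 ≤ zerosCount s →
      ∀ x, s x = false → ¬ Unhappy G s x := by
    intro s hz x hx
    rw [Unhappy, not_lt]
    have hdegx : G.degree x = (univ.filter (fun y => G.Adj x y)).card := by
      rw [← SimpleGraph.card_neighborFinset_eq_degree]
      congr 1
      ext y
      simp [SimpleGraph.mem_neighborFinset]
    have hsplit := Finset.card_filter_add_card_filter_not
      (s := (univ : Finset V)) (p := fun y => G.Adj x y)
    have hsplit2 := Finset.card_filter_add_card_filter_not
      (s := (univ : Finset V)) (p := fun y => s y = false)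
    have hzc : zerosCount s = (univ.filter (fun y => s y = false)).card := rfl
    have hsub : (univ.filter (fun y => s y = false)) ⊆
        (univ.filter (fun y => G.Adj x y ∧ s y = s x)) ∪
        (univ.filter (fun y => ¬ G.Adj x y)) := by
      intro y hy
      simp only [mem_filter, mem_union, mem_univ, true_and] at *
      by_cases h : G.Adj x y
      · exact Or.inl ⟨h, by rw [hy, hx]⟩
      · exact Or.inr h
    have hZA := (card_le_card hsub).trans (card_union_le _ _)
    have hBsub : (univ.filter (fun y => G.Adj x y ∧ s y ≠ s x)) ⊆
        univ.filter (fun y => ¬ (s y = false)) := by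
      intro y hy
      simp only [mem_filter, mem_univ, true_and, hx] at *
      exact hy.2
    have hB := card_le_card hBsub
    have hd := hdeg x
    have hcard := card_univ (α := V)
    simp only [card_univ] at hsplit hsplit2
    omega
  refine ⟨key, ?_⟩
  rintro ⟨s₀, h1, t, hreach, hstab, hle⟩
  have hz0 : Fintype.card V / 2 + 1 ≤ zerosCount s₀ := by omega
  have hinv : ∀ u, ReachesProf G s₀ u → Fintype.card V / 2 + 1 ≤ zerosCount u := by
    intro u hu
    induction hu with
    | refl => exact hz0
    | @tail b c h1 h2 ih =>
      obtain ⟨x, hunx, rfl⟩ := h2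
      have hsx : b x = true := by
        by_contra h
        exact key _ ih x (by simpa using h) hunx
      have hmono : zerosCount b ≤ zerosCount (Function.update b x (!b x)) := by
        apply card_le_card
        intro y hy
        simp only [mem_filter, mem_univ, true_and] at *
        have hyx : y ≠ x := by
          intro h; rw [h, hsx] at hy; exact absurd hy (by simp)
        rw [Function.update_of_ne hyx]
        exact hy
      omega
  have := hinv t hreach
  omega
end

section
/- Suppose a graph G on n vertices admits a bisection S = (S, S̄) with |S| = ⌈n/2⌉ in which every vertex x ∈ S has def(x) ≥ 0 (i.e., W(x,S) ≥ W(x,S̄)) and at least one vertex v ∈ S has def(v) > 0. Then G is mbM. Specifically, the profile assigning preference 1 to all of S except v and preference 0 elsewhere has a strict majority preferring 0; vertex v is unhappy and after it flips to 1, every vertex of S has preference 1 and is not unhappy, so in any reachable stable profile at least ⌈n/2⌉ vertices have preference 1. -/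
open Finset

variable {V : Type*}

section Aux
set_option linter.unusedSectionVars false

variable [Fintype V] [DecidableEq V] (G : SimpleGraph V) [DecidableRel G.Adj]

/-- Number of agreeing neighbors. -/
def agreeC (s : V → Bool) (x : V) : ℕ :=
  (univ.filter (fun y => G.Adj x y ∧ s y = s x)).card

/-- Number of disagreeing neighbors. -/
def disC (s : V → Bool) (x : V) : ℕ :=
  (univ.filter (fun y => G.Adj x y ∧ s y ≠ s x)).card

/-- Potential: total number of (ordered) disagreeing adjacent pairs. -/
def pot (s : V → Bool) : ℕ := ∑ x, disC G s x

lemma unhappy_iff (s : V → Bool) (x : V) :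
    Unhappy G s x ↔ agreeC G s x < disC G s x := Iff.rfl

/-- Indicator of a disagreeing adjacent pair. -/
def fC (s : V → Bool) (x y : V) : ℕ :=
  if G.Adj x y ∧ s y ≠ s x then 1 else 0

lemma disC_eq_sum (s : V → Bool) (x : V) : disC G s x = ∑ y, fC G s x y :=
  Finset.card_filter _ _

lemma sum_fC_col (s : V → Bool) (w : V) : ∑ x, fC G s x w = disC G s w := by
  rw [disC_eq_sum]
  refine Finset.sum_congr rfl fun y _ => ?_
  exact if_congr (and_congr (G.adj_comm y w) ne_comm) rfl rfl

lemma pot_split (s : V → Bool) (w : V) :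
    pot G s = 2 * disC G s w + ∑ x ∈ univ.erase w, ∑ y ∈ univ.erase w, fC G s x y := by
  have h1 : pot G s = ∑ x, ∑ y, fC G s x y :=
    Finset.sum_congr rfl fun x _ => disC_eq_sum G s x
  rw [h1, ← Finset.add_sum_erase _ _ (mem_univ w)]
  have h2 : ∀ x, (∑ y, fC G s x y) = fC G s x w + ∑ y ∈ univ.erase w, fC G s x y :=
    fun x => (Finset.add_sum_erase _ _ (mem_univ w)).symm
  rw [Finset.sum_congr rfl fun x _ => h2 x, Finset.sum_add_distrib]
  have h3 : ∑ x ∈ univ.erase w, fC G s x w = disC G s w := by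
    have h4 := sum_fC_col G s w
    rw [← Finset.add_sum_erase _ (fun x => fC G s x w) (mem_univ w)] at h4
    have h5 : fC G s w w = 0 := by simp [fC]
    omega
  rw [← disC_eq_sum, h3]
  ring

lemma pot_step (s : V → Bool) (w : V) (hw : Unhappy G s w) :
    pot G (Function.update s w (!s w)) < pot G s := by
  set t := Function.update s w (!s w) with ht
  have hd : disC G t w = agreeC G s w := by
    unfold disC agreeC
    congr 1
    ext y
    simp only [mem_filter, mem_univ, true_and]
    by_cases hyw : y = w
    · subst hyw; simp
    · rw [ht]
      simp only [Function.update_of_ne hyw, Function.update_self]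
      constructor
      · rintro ⟨hadj, hb⟩
        refine ⟨hadj, ?_⟩
        cases hsy : s y <;> cases hsw : s w <;> simp_all
      · rintro ⟨hadj, hb⟩
        refine ⟨hadj, ?_⟩
        cases hsy : s y <;> cases hsw : s w <;> simp_all
  have hR : ∑ x ∈ univ.erase w, ∑ y ∈ univ.erase w, fC G t x y
          = ∑ x ∈ univ.erase w, ∑ y ∈ univ.erase w, fC G s x y := by
    refine Finset.sum_congr rfl fun x hx => Finset.sum_congr rfl fun y hy => ?_
    rw [mem_erase] at hx hy
    unfold fC
    rw [ht]
    simp [Function.update_of_ne hx.1, Function.update_of_ne hy.1]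
  have h1 := pot_split G s w
  have h2 := pot_split G t w
  rw [hd, hR] at h2
  have hlt : agreeC G s w < disC G s w := hw
  omega

theorem exists_stable (s : V → Bool) : ∃ t, ReachesProf G s t ∧ StableProf G t := by
  by_cases hs : StableProf G s
  · exact ⟨s, Relation.ReflTransGen.refl, hs⟩
  · simp only [StableProf, not_forall, not_not] at hs
    obtain ⟨x, hx⟩ := hs
    have hdec : pot G (Function.update s x (!s x)) < pot G s := pot_step G s x hx
    obtain ⟨u, hu1, hu2⟩ := exists_stable (Function.update s x (!s x))
    exact ⟨u, Relation.ReflTransGen.head ⟨x, hx, rfl⟩ hu1, hu2⟩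
termination_by pot G s

lemma not_unhappy_in (S : Finset V) (h0 : ∀ x ∈ S, 0 ≤ defic G S x)
    {s : V → Bool} (hs : ∀ x ∈ S, s x = true) {x : V} (hx : x ∈ S) :
    ¬ Unhappy G s x := by
  rw [unhappy_iff]
  push_neg
  have h1 : nbrCount G x S ≤ agreeC G s x := by
    apply Finset.card_le_card
    intro y hy
    rw [Finset.mem_filter] at hy ⊢
    exact ⟨mem_univ y, hy.2, by rw [hs y hy.1, hs x hx]⟩
  have h2 : disC G s x ≤ nbrCount G x Sᶜ := by
    apply Finset.card_le_card
    intro y hy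
    rw [Finset.mem_filter] at hy ⊢
    refine ⟨Finset.mem_compl.mpr fun hyS => ?_, hy.2.1⟩
    exact hy.2.2 (by rw [hs y hyS, hs x hx])
  have h3 := h0 x hx
  simp only [defic, if_pos hx] at h3
  omega

lemma invariant_step (S : Finset V) (h0 : ∀ x ∈ S, 0 ≤ defic G S x)
    {s t : V → Bool} (hs : ∀ x ∈ S, s x = true) (hst : FlipStep G s t) :
    ∀ x ∈ S, t x = true := by
  obtain ⟨w, hw, rfl⟩ := hst
  have hwS : w ∉ S := fun hwS => not_unhappy_in G S h0 hs hwS hw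
  intro x hx
  rw [Function.update_of_ne (by rintro rfl; exact hwS hx)]
  exact hs x hx

lemma invariant_reach (S : Finset V) (h0 : ∀ x ∈ S, 0 ≤ defic G S x)
    {s t : V → Bool} (hst : ReachesProf G s t) (hs : ∀ x ∈ S, s x = true) :
    ∀ x ∈ S, t x = true := by
  induction hst with
  | refl => exact hs
  | tail _ hbc ih => exact invariant_step G S h0 ih hbc

lemma counts_sum (s : V → Bool) : onesCount s + zerosCount s = Fintype.card V := by
  have := Finset.card_filter_add_card_filter_not
    (s := (univ : Finset V)) (p := fun x => s x = true)
  simp only [Bool.not_eq_true] at this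
  simpa [onesCount, zerosCount, Finset.card_univ] using this

end Aux

/-- if G has a bisection whose larger side consists of vertices of
nonnegative deficiency with at least one of positive deficiency, then G is mbM. -/
theorem stmt7 [Fintype V] [DecidableEq V] (G : SimpleGraph V) [DecidableRel G.Adj]
    (S : Finset V) (hcard : S.card = (Fintype.card V + 1) / 2)
    (h0 : ∀ x ∈ S, 0 ≤ defic G S x)
    (v : V) (hv : v ∈ S) (hpos : 0 < defic G S v) :
    MbM G := by
  classical
  set n := Fintype.card V with hn
  have hnpos : 0 < n := Fintype.card_pos_iff.mpr ⟨v⟩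
  have hSn : S.card ≤ n := by rw [hn, ← Finset.card_univ]; exact Finset.card_le_univ S
  set s₀ : V → Bool := fun x => decide (x ∈ S ∧ x ≠ v) with hs₀
  set s₁ : V → Bool := fun x => decide (x ∈ S) with hs₁
  have hs₀v : s₀ v = false := by simp [hs₀]
  have hposn : nbrCount G v Sᶜ < nbrCount G v S := by
    simp only [defic, if_pos hv] at hpos
    omega
  have hs₀t : ∀ y, s₀ y = true ↔ (y ∈ S ∧ y ≠ v) := fun y => by simp [hs₀]
  have hunv : Unhappy G s₀ v := by
    rw [unhappy_iff]
    have hA : agreeC G s₀ v = nbrCount G v Sᶜ := by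
      unfold agreeC nbrCount
      congr 1
      ext y
      simp only [Finset.mem_filter, mem_univ, true_and, Finset.mem_compl, hs₀v]
      constructor
      · rintro ⟨hadj, hb⟩
        refine ⟨fun hyS => ?_, hadj⟩
        have := (hs₀t y).mpr ⟨hyS, hadj.ne'⟩
        simp_all
      · rintro ⟨hyS, hadj⟩
        refine ⟨hadj, ?_⟩
        simp only [hs₀, decide_eq_false_iff_not]
        exact fun h => hyS h.1
    have hD : disC G s₀ v = nbrCount G v S := by
      unfold disC nbrCount
      congr 1
      ext y
      simp only [Finset.mem_filter, mem_univ, true_and, hs₀v, ne_eq, Bool.not_eq_false]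
      constructor
      · rintro ⟨hadj, hb⟩
        exact ⟨((hs₀t y).mp hb).1, hadj⟩
      · rintro ⟨hyS, hadj⟩
        exact ⟨hadj, (hs₀t y).mpr ⟨hyS, hadj.ne'⟩⟩
    rw [hA, hD]
    exact hposn
  have hstep : FlipStep G s₀ s₁ := by
    refine ⟨v, hunv, ?_⟩
    funext x
    by_cases hxv : x = v
    · subst hxv
      rw [Function.update_self, hs₀v]
      simp [hs₁, hv]
    · rw [Function.update_of_ne hxv]
      simp [hs₀, hs₁, hxv]
  have hP1 : ∀ x ∈ S, s₁ x = true := fun x hx => by simp [hs₁, hx]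
  obtain ⟨t, hreach, hstable⟩ := exists_stable G s₁
  have hPt : ∀ x ∈ S, t x = true := invariant_reach G S h0 hreach hP1
  refine ⟨s₀, ?_, t, Relation.ReflTransGen.head hstep hreach, hstable, ?_⟩
  · -- majority of zeros initially
    have hones : onesCount s₀ = S.card - 1 := by
      have : univ.filter (fun x => s₀ x = true) = S.erase v := by
        ext x
        simp [hs₀, Finset.mem_erase, and_comm]
      rw [onesCount, this, Finset.card_erase_of_mem hv]
    have hsum := counts_sum s₀
    have hcpos : 0 < S.card := Finset.card_pos.mpr ⟨v, hv⟩
    omega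
  · -- at most half zeros at the end
    have hz : zerosCount t ≤ n - S.card := by
      have hsub : univ.filter (fun x => t x = false) ⊆ Sᶜ := by
        intro x hx
        rw [Finset.mem_filter] at hx
        rw [Finset.mem_compl]
        intro hxS
        rw [hPt x hxS] at hx
        exact absurd hx.2 (by simp)
      calc zerosCount t ≤ Sᶜ.card := Finset.card_le_card hsub
        _ = n - S.card := by rw [Finset.card_compl, hn]
    omega
end

section
/- Let S = (S, S̄) be a bisection of a graph G in which every vertex x of G satisfies def_S(x) ≥ −1, every vertex of S̄ has deficiency −1, and some vertex of S has deficiency 0. If moreover for every x ∈ S with def(x) = 0 and every y ∈ S̄ with def(y) = −1 the minimum-bisection inequality def(x) + def(y) + 2W(x,y) ≥ 0 holds, then every vertex x ∈ S with def(x) = 0 is adjacent to all vertices of S̄; in particular W(x, S̄) = |S̄|, and if |S| = |S̄| = n/2 this forces W(x,S) = n/2, a contradiction. Hence in a minimum bisection of an even-order graph it is impossible that all vertices of S̄ have deficiency −1 while some vertex of S has deficiency 0. -/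
open Finset

variable {V : Type*}

/-- in a bisection of an even-order graph where every vertex has deficiency
≥ −1, all vertices of S̄ have deficiency −1, some vertex of S has deficiency 0, and the
minimum-bisection inequality holds for the relevant pairs, we get a contradiction. -/
theorem stmt10 [Fintype V] [DecidableEq V] (G : SimpleGraph V) [DecidableRel G.Adj]
    (heven : Even (Fintype.card V))
    (S : Finset V) (hcard : S.card = Fintype.card V / 2)
    (hge : ∀ x : V, -1 ≤ defic G S x)
    (hbar : ∀ y ∉ S, defic G S y = -1)
    (x : V) (hx : x ∈ S) (hx0 : defic G S x = 0)
    (hineq : ∀ x' ∈ S, defic G S x' = 0 → ∀ y ∉ S, defic G S y = -1 →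
      0 ≤ defic G S x' + defic G S y + 2 * (if G.Adj x' y then 1 else 0)) :
    False := by
  have hadj : ∀ y ∉ S, G.Adj x y := by
    intro y hy
    have h := hineq x hx hx0 y hy (hbar y hy)
    rw [hx0, hbar y hy] at h
    by_contra hna
    simp [hna] at h
  have hfull : nbrCount G x Sᶜ = Sᶜ.card := by
    unfold nbrCount
    congr 1
    apply Finset.filter_true_of_mem
    intro y hy
    exact hadj y (by simpa using hy)
  have hsub : nbrCount G x S ≤ S.card - 1 := by
    have : S.filter (fun y => G.Adj x y) ⊆ S.erase x := by
      intro y hy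
      simp only [Finset.mem_filter] at hy
      exact Finset.mem_erase.mpr ⟨fun h => G.irrefl (h ▸ hy.2), hy.1⟩
    calc nbrCount G x S ≤ (S.erase x).card := Finset.card_le_card this
      _ = S.card - 1 := Finset.card_erase_of_mem hx
  have hcc : Sᶜ.card = S.card := by
    rw [Finset.card_compl, hcard]
    obtain ⟨k, hk⟩ := heven
    omega
  have hdef : (nbrCount G x S : ℤ) - (nbrCount G x Sᶜ : ℤ) = 0 := by
    have := hx0
    unfold defic at this
    rwa [if_pos hx] at this
  have hpos : 1 ≤ S.card := Finset.card_pos.mpr ⟨x, hx⟩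
  rw [hfull, hcc] at hdef
  omega
end

section
/- In majority dynamics on a finite graph, consider any sequence of updates starting from a profile s₀. Then there exists a reordered/modified sequence of updates from s₀, containing at most two updates per vertex, in which all 0-to-1 flips precede all 1-to-0 flips, every 0-to-1 flip is performed by a vertex that is unhappy at that moment, and the final profile has at least as many vertices with preference 1 as the final profile of the original sequence provided the original sequence ends in a stable profile. -/
open Finset

variable {V : Type*}

/-- A run of 0-to-1 flips along a list of vertices, each flip performed by an unhappy
vertex currently holding preference 0. -/
inductive Run01 [Fintype V] [DecidableEq V] (G : SimpleGraph V) [DecidableRel G.Adj] :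
    (V → Bool) → List V → (V → Bool) → Prop
  | nil (s : V → Bool) : Run01 G s [] s
  | cons (s : V → Bool) (x : V) (L : List V) (t : V → Bool) :
      s x = false → Unhappy G s x →
      Run01 G (Function.update s x true) L t → Run01 G s (x :: L) t

/-- A run of 1-to-0 flips along a list of vertices (unhappiness not required). -/
inductive Run10 [Fintype V] [DecidableEq V] (G : SimpleGraph V) [DecidableRel G.Adj] :
    (V → Bool) → List V → (V → Bool) → Prop
  | nil (s : V → Bool) : Run10 G s [] s
  | cons (s : V → Bool) (x : V) (L : List V) (t : V → Bool) :
      s x = true →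
      Run10 G (Function.update s x false) L t → Run10 G s (x :: L) t

/-!
Extra 1s only make a 0-holder more unhappy, so every 0-to-1 flip of an arbitrary
update sequence stays legal when performed against a pointwise larger profile.
Replaying only the 0-to-1 flips therefore reaches a profile `m` that dominates the
final profile pointwise, and `m` is brought down to it by flipping each surplus 1 once.
-/

section Runs

variable [Fintype V] [DecidableEq V] {G : SimpleGraph V} [DecidableRel G.Adj]

theorem Unhappy.mono {s s' : V → Bool} {x : V} (h : Unhappy G s x) (hle : s ≤ s')
    (hx : s x = false) (hx' : s' x = false) : Unhappy G s' x := by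
  unfold Unhappy at h ⊢
  rw [hx] at h
  rw [hx']
  have hone : ∀ y, s y = true → s' y = true := fun y => Bool.le_iff_imp.mp (hle y)
  have hzero : ∀ y, s' y = false → s y = false := fun y hy => by
    by_contra hsy
    simp_all
  calc (univ.filter fun y => G.Adj x y ∧ s' y = false).card
      ≤ (univ.filter fun y => G.Adj x y ∧ s y = false).card :=
        card_le_card fun y => by simpa using fun hxy hy => ⟨hxy, hzero y hy⟩
    _ < (univ.filter fun y => G.Adj x y ∧ s y ≠ false).card := h
    _ ≤ (univ.filter fun y => G.Adj x y ∧ s' y ≠ false).card :=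
        card_le_card fun y => by simpa using fun hxy hy => ⟨hxy, hone y hy⟩

theorem Run01.eq_false_of_mem {s m : V → Bool} {L : List V} (h : Run01 G s L m) :
    ∀ x ∈ L, s x = false := by
  induction h with
  | nil => simp
  | cons s y L t hy _ _ ih =>
    rintro x (_ | ⟨_, hx⟩)
    · exact hy
    · have := ih x hx
      rwa [Function.update_of_ne (by rintro rfl; simp at this)] at this

theorem Run01.nodup {s m : V → Bool} {L : List V} (h : Run01 G s L m) : L.Nodup := by
  induction h with
  | nil => simp
  | cons s y L t _ _ hrun ih =>
    exact List.nodup_cons.mpr ⟨fun hy => by simpa using hrun.eq_false_of_mem y hy, ih⟩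

theorem Run01.snoc {s m : V → Bool} {L : List V} (h : Run01 G s L m) {x : V}
    (hx : m x = false) (hun : Unhappy G m x) :
    Run01 G s (L ++ [x]) (Function.update m x true) := by
  induction h with
  | nil s => exact .cons _ _ _ _ hx hun (.nil _)
  | cons s y L t hy huny _ ih => exact .cons _ _ _ _ hy huny (ih hx hun)

theorem ReachesProf.exists_run01_ge {s₀ s : V → Bool} (h : ReachesProf G s₀ s) :
    ∃ L m, Run01 G s₀ L m ∧ s ≤ m := by
  induction h with
  | refl => exact ⟨[], s₀, .nil s₀, le_rfl⟩
  | @tail a b _ hstep ih =>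
    obtain ⟨L, m, hrun, hle⟩ := ih
    obtain ⟨x, hun, rfl⟩ := hstep
    cases hax : a x with
    | true =>
      refine ⟨L, m, hrun, le_trans (fun y => ?_) hle⟩
      rcases eq_or_ne y x with rfl | hne
      · simp [hax]
      · simp [Function.update_of_ne hne]
    | false =>
      by_cases hmx : m x = true
      · refine ⟨L, m, hrun, fun y => ?_⟩
        rcases eq_or_ne y x with rfl | hne
        · simp [hmx]
        · simpa [Function.update_of_ne hne] using hle y
      · have hmx : m x = false := by simpa using hmx
        refine ⟨L ++ [x], _, hrun.snoc hmx (hun.mono hle hax hmx), fun y => ?_⟩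
        rcases eq_or_ne y x with rfl | hne
        · simp
        · simpa [Function.update_of_ne hne] using hle y

theorem run10_of_le {s m : V → Bool} (hle : s ≤ m) {L : List V} (hL : L.Nodup)
    (hmem : ∀ y, y ∈ L ↔ m y ≠ s y) : Run10 G m L s := by
  induction L generalizing m with
  | nil =>
    obtain rfl : m = s := funext fun y => by simpa using hmem y
    exact .nil m
  | cons x L ih =>
    obtain ⟨hxL, hL⟩ := List.nodup_cons.mp hL
    have hx : m x ≠ s x := (hmem x).mp List.mem_cons_self
    have hmx : m x = true := by
      have := hle x
      revert hx this; cases m x <;> cases s x <;> simp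
    have hsx : s x = false := by simpa [hmx] using hx.symm
    refine .cons _ _ _ _ hmx (ih (fun y => ?_) hL fun y => ?_)
    all_goals rcases eq_or_ne y x with rfl | hne
    · simp [hsx]
    · simpa [Function.update_of_ne hne] using hle y
    · simp [hxL, hsx]
    · simpa [Function.update_of_ne hne, hne] using hmem y

theorem exists_run10_of_le {s m : V → Bool} (hle : s ≤ m) :
    ∃ L, Run10 G m L s ∧ L.Nodup :=
  ⟨(univ.filter fun y => m y ≠ s y).toList,
    run10_of_le hle (nodup_toList _) (by simp), nodup_toList _⟩

end Runs

theorem stmt13_general [Fintype V] [DecidableEq V] (G : SimpleGraph V) [DecidableRel G.Adj]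
    (s₀ s : V → Bool) (hreach : ReachesProf G s₀ s) :
    ∃ (L₁ L₂ : List V) (m t : V → Bool),
      Run01 G s₀ L₁ m ∧ Run10 G m L₂ t ∧
      (∀ x : V, (L₁ ++ L₂).count x ≤ 2) ∧
      onesCount s ≤ onesCount t := by
  obtain ⟨L₁, m, hrun₁, hle⟩ := hreach.exists_run01_ge
  obtain ⟨L₂, hrun₂, hnodup₂⟩ := exists_run10_of_le (G := G) hle
  refine ⟨L₁, L₂, m, s, hrun₁, hrun₂, fun x => ?_, le_rfl⟩
  have h₁ := List.nodup_iff_count_le_one.mp hrun₁.nodup x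
  have h₂ := List.nodup_iff_count_le_one.mp hnodup₂ x
  rw [List.count_append]
  omega

/-- any update sequence ending in a stable profile can be replaced by a
sequence with at most two updates per vertex, in which all 0-to-1 flips (each by an
unhappy vertex) precede all 1-to-0 flips, ending with at least as many 1s. -/
theorem stmt13 [Fintype V] [DecidableEq V] (G : SimpleGraph V) [DecidableRel G.Adj]
    (s₀ s : V → Bool) (hreach : ReachesProf G s₀ s) (hstable : StableProf G s) :
    ∃ (L₁ L₂ : List V) (m t : V → Bool),
      Run01 G s₀ L₁ m ∧ Run10 G m L₂ t ∧
      (∀ x : V, (L₁ ++ L₂).count x ≤ 2) ∧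
      onesCount s ≤ onesCount t :=
  stmt13_general G s₀ s hreach
end

section
/- Let G be a graph on an even number n of vertices and S = (S,S̄) a bisection in which one side S̄ is a clique whose every vertex y has def(y) = 0, and the other side S contains a vertex z of degree n−2 with def(z) = −2. Assume G is non-extremal (at least two vertices have degree < n−2). Then S is not a minimum bisection; i.e., there exists a bisection of G with width strictly smaller than W(S,S̄) = (n/2)(n/2−1). -/
/-! Write `H = Gᶜ` for the graph of non-edges. For a bisection `(T, Tᶜ)` the width is
`|T| |Tᶜ| - e_H(T, Tᶜ)`, and `e_H(S, S̄) = |S̄|` since every vertex of `S̄` misses exactly one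
vertex of `S`. Given `A ⊆ S`, exchange `A` with a set `C ⊆ S̄` of the same size containing as
many `H`-neighbours of `A` as possible; for `T = A ∪ (S̄ \ C)` this gives
`e_H(T, Tᶜ) = |S̄| + e_H(A, S \ A) - | |A| - e_H(A, S̄) |`,
so any `A ⊆ S` with `| |A| - e_H(A, S̄) | < e_H(A, S \ A)` yields a narrower bisection.

The vertex `z` has no `H`-neighbour in `S̄` and exactly one, `w`, in `S`, and non-extremality
gives two vertices `a ≠ b` of `S \ {z}` with `H`-degree at least 2, say `a ≠ w`. The set
`{z, a}` works unless `a` has many `H`-neighbours in `S̄`; then `{z, a} ∪ N` works, where `N`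
consists of vertices of `S \ {z, a, w}` without `H`-neighbours in `S̄`, provided there are enough
of them. If there are not, counting `e_H(S, S̄) = |S̄|` shows that `w` has no `H`-neighbour in
`S̄` and every vertex of `S \ {z, a, w}` at most one; then `{w}` works if `b = w`, and `{z, b}`
otherwise. -/

open Finset

variable {V : Type*}

open SimpleGraph

theorem Finset.exists_subset_card_eq_card_filter_eq_min {α : Type*} {U : Finset α} {k : ℕ}
    (hk : k ≤ #U) (p : α → Prop) [DecidablePred p] :
    ∃ C ⊆ U, #C = k ∧ #(C.filter p) = min k #(U.filter p) := by
  rcases le_total k #(U.filter p) with h | h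
  · obtain ⟨C, hCU, hC⟩ := exists_subset_card_eq h
    refine ⟨C, hCU.trans (filter_subset _ _), hC, ?_⟩
    rw [min_eq_left h, filter_true_of_mem fun x hx => (mem_filter.1 (hCU hx)).2, hC]
  · obtain ⟨C, hFC, hCU, hC⟩ := exists_subsuperset_card_eq (filter_subset p U) h hk
    refine ⟨C, hCU, hC, ?_⟩
    rw [min_eq_right h, Subset.antisymm (filter_subset_filter p hCU)
      fun x hx => mem_filter.2 ⟨hFC hx, (mem_filter.1 hx).2⟩]

theorem Finset.card_add_card_filter_two_le_le_card_filter_eq_zero_add_sum {α : Type*}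
    (s : Finset α) (f : α → ℕ) :
    #s + #(s.filter fun x => 2 ≤ f x) ≤ #(s.filter fun x => f x = 0) + ∑ x ∈ s, f x := by
  simp only [card_eq_sum_ones, sum_filter, ← sum_add_distrib]
  exact sum_le_sum fun x _ => by split_ifs <;> omega

namespace SimpleGraph

variable (G : SimpleGraph V) [DecidableRel G.Adj]

theorem card_interedges_comm (A B : Finset V) :
    #(G.interedges A B) = #(G.interedges B A) :=
  have := G.symm
  Rel.card_interedges_comm A B

variable [Fintype V] [DecidableEq V]

theorem card_interedges_eq_sum_nbrCount (A B : Finset V) :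
    #(G.interedges A B) = ∑ x ∈ A, nbrCount G x B := by
  rw [interedges_def, card_filter, sum_product]
  simp only [nbrCount, card_filter]

theorem bwidth_eq_card_interedges (T : Finset V) : bwidth G T = #(G.interedges T Tᶜ) :=
  (card_interedges_eq_sum_nbrCount G T Tᶜ).symm

theorem card_interedges_union_left {A₁ A₂ : Finset V} (h : Disjoint A₁ A₂) (B : Finset V) :
    #(G.interedges (A₁ ∪ A₂) B) = #(G.interedges A₁ B) + #(G.interedges A₂ B) := by
  simp only [card_interedges_eq_sum_nbrCount, sum_union h]

theorem card_interedges_union_right (A : Finset V) {B₁ B₂ : Finset V} (h : Disjoint B₁ B₂) :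
    #(G.interedges A (B₁ ∪ B₂)) = #(G.interedges A B₁) + #(G.interedges A B₂) := by
  simp only [card_interedges_comm G A, card_interedges_union_left G h]

theorem nbrCount_add_nbrCount_compl_eq_degree (x : V) (A : Finset V) :
    nbrCount G x A + nbrCount G x Aᶜ = G.degree x := by
  rw [nbrCount, nbrCount, ← card_union_of_disjoint (disjoint_filter_filter disjoint_compl_right),
    ← filter_union, union_compl, degree, neighborFinset_eq_filter]

theorem nbrCount_add_nbrCount_compl_eq_card {x : V} {A : Finset V} (hx : x ∉ A) :
    nbrCount G x A + nbrCount Gᶜ x A = #A := by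
  rw [nbrCount, nbrCount, ← card_union_of_disjoint (disjoint_filter.2 fun _ _ h h' => h'.2 h)]
  congr 1
  ext y
  simp only [mem_union, mem_filter, compl_adj]
  constructor
  · rintro (h | h) <;> exact h.1
  · intro hy
    by_cases hxy : G.Adj x y
    · exact .inl ⟨hy, hxy⟩
    · exact .inr ⟨hy, fun h => hx (h ▸ hy), hxy⟩

theorem nbrCount_compl_eq_zero {x : V} {A : Finset V} (h : ∀ y ∈ A, x ≠ y → G.Adj x y) :
    nbrCount Gᶜ x A = 0 :=
  card_eq_zero.2 (filter_eq_empty_iff.2 fun y hy hadj => hadj.2 (h y hy hadj.1))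

theorem bwidth_add_card_interedges_compl (T : Finset V) :
    bwidth G T + #(Gᶜ.interedges T Tᶜ) = #T * #Tᶜ := by
  rw [bwidth_eq_card_interedges, card_interedges_add_card_interedges_compl G disjoint_compl_right]

theorem degree_add_degree_compl (x : V) : G.degree x + Gᶜ.degree x + 1 = Fintype.card V := by
  have := G.degree_lt_card_verts x
  rw [degree_compl]
  omega

theorem nbrCount_sdiff_of_forall_not_adj {x : V} {A B : Finset V} (h : ∀ y ∈ B, ¬G.Adj x y) :
    nbrCount G x (A \ B) = nbrCount G x A := by
  rw [nbrCount, nbrCount]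
  congr 1
  ext y
  simp only [mem_filter, mem_sdiff]
  exact ⟨fun hy => ⟨hy.1.1, hy.2⟩, fun hy => ⟨⟨hy.1, fun hB => h y hB hy.2⟩, hy.2⟩⟩

end SimpleGraph

/-- `Sᶜ` is a clique all of whose vertices have deficiency `0`, i.e. miss exactly one vertex
of `S`. -/
structure IsCliqueSide [Fintype V] [DecidableEq V] (G : SimpleGraph V) [DecidableRel G.Adj]
    (S : Finset V) : Prop where
  card_eq : #S = #Sᶜ
  adj : ∀ y ∈ Sᶜ, ∀ y' ∈ Sᶜ, y ≠ y' → G.Adj y y'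
  nbrCount_compl : ∀ y ∈ Sᶜ, nbrCount Gᶜ y S = 1

namespace IsCliqueSide

variable [Fintype V] [DecidableEq V] {G : SimpleGraph V} [DecidableRel G.Adj] {S : Finset V}

theorem of_defic_eq_zero (hbal : #S = #Sᶜ) (hclique : ∀ y ∈ Sᶜ, ∀ y' ∈ Sᶜ, y ≠ y' → G.Adj y y')
    (hdef : ∀ y ∈ Sᶜ, defic G S y = 0) : IsCliqueSide G S := by
  refine ⟨hbal, hclique, fun y hy => ?_⟩
  have hyS := mem_compl.1 hy
  have hd := hdef y hy
  rw [defic, if_neg hyS] at hd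
  have := nbrCount_compl_eq_zero G (hclique y hy)
  have := nbrCount_add_nbrCount_compl_eq_degree G y S
  have := nbrCount_add_nbrCount_compl_eq_degree Gᶜ y S
  have := nbrCount_add_nbrCount_compl_eq_card G hyS
  have := degree_add_degree_compl G y
  have := card_add_card_compl S
  omega

theorem card_interedges_compl_eq_zero (hS : IsCliqueSide G S) {B C : Finset V} (hB : B ⊆ Sᶜ)
    (hC : C ⊆ Sᶜ) : #(Gᶜ.interedges B C) = 0 := by
  rw [card_interedges_eq_sum_nbrCount]
  exact sum_eq_zero fun y hy => nbrCount_compl_eq_zero G fun y' hy' => hS.adj y (hB hy) y' (hC hy')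

theorem card_interedges_compl_eq_card (hS : IsCliqueSide G S) {B : Finset V} (hB : B ⊆ Sᶜ) :
    #(Gᶜ.interedges B S) = #B := by
  rw [card_interedges_eq_sum_nbrCount, sum_congr rfl fun y hy => hS.nbrCount_compl y (hB hy),
    card_eq_sum_ones]

theorem card_interedges_compl_eq_card_filter (hS : IsCliqueSide G S) {A C : Finset V}
    (hA : A ⊆ S) (hC : C ⊆ Sᶜ) :
    #(Gᶜ.interedges C A) = #(C.filter fun y => nbrCount Gᶜ y A ≠ 0) := by
  rw [card_interedges_eq_sum_nbrCount, card_filter]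
  refine sum_congr rfl fun y hy => ?_
  have : nbrCount Gᶜ y A ≤ 1 :=
    hS.nbrCount_compl y (hC hy) ▸ card_le_card (filter_subset_filter _ hA)
  split_ifs <;> omega

theorem degree_compl_eq_one (hS : IsCliqueSide G S) {y : V} (hy : y ∈ Sᶜ) : Gᶜ.degree y = 1 := by
  rw [← nbrCount_add_nbrCount_compl_eq_degree Gᶜ y S, nbrCount_compl_eq_zero G (hS.adj y hy),
    hS.nbrCount_compl y hy]

theorem sum_nbrCount_compl_eq_card (hS : IsCliqueSide G S) :
    ∑ x ∈ S, nbrCount Gᶜ x Sᶜ = #S := by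
  rw [← card_interedges_eq_sum_nbrCount, card_interedges_comm,
    hS.card_interedges_compl_eq_card subset_rfl, hS.card_eq]

theorem bwidth_lt_of_lt_card_interedges_compl (hS : IsCliqueSide G S) {T : Finset V}
    (hT : #T = #S) (hlt : #S < #(Gᶜ.interedges T Tᶜ)) : bwidth G T < bwidth G S := by
  have hTS := bwidth_add_card_interedges_compl G T
  have hSS := bwidth_add_card_interedges_compl G S
  rw [card_interedges_comm, hS.card_interedges_compl_eq_card subset_rfl, ← hS.card_eq] at hSS
  rw [card_compl, hT, ← card_compl, ← hS.card_eq] at hTS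
  omega

theorem card_interedges_compl_exchange (hS : IsCliqueSide G S) {A C : Finset V} (hAS : A ⊆ S)
    (hCS : C ⊆ Sᶜ) :
    #(A ∪ (Sᶜ \ C)) + #C = #A + #S ∧
    #(Gᶜ.interedges (A ∪ (Sᶜ \ C)) (A ∪ (Sᶜ \ C))ᶜ) + #(Gᶜ.interedges Sᶜ A) + #C
      = #(Gᶜ.interedges A (S \ A)) + 2 * #(Gᶜ.interedges C A) + #S := by
  have hAC : Disjoint A (Sᶜ \ C) :=
    disjoint_of_subset_left hAS (disjoint_compl_right.mono_right sdiff_subset)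
  have hSC : Disjoint (S \ A) C :=
    disjoint_of_subset_right hCS (disjoint_compl_right.mono_left sdiff_subset)
  have hTc : (A ∪ (Sᶜ \ C))ᶜ = (S \ A) ∪ C := by
    ext x
    have := @hAS x
    have := @hCS x
    simp only [mem_compl, mem_union, mem_sdiff] at *
    tauto
  have hout : #(Gᶜ.interedges (Sᶜ \ C) (S \ A)) + #(Gᶜ.interedges (Sᶜ \ C) A) = #(Sᶜ \ C) := by
    rw [← card_interedges_union_right _ _ sdiff_disjoint, sdiff_union_of_subset hAS,
      hS.card_interedges_compl_eq_card sdiff_subset]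
  have hin : #(Gᶜ.interedges (Sᶜ \ C) A) + #(Gᶜ.interedges C A) = #(Gᶜ.interedges Sᶜ A) := by
    rw [← card_interedges_union_left _ sdiff_disjoint, sdiff_union_of_subset hCS]
  have := card_le_card hCS
  have := hS.card_eq
  rw [card_sdiff_of_subset hCS] at hout
  refine ⟨by rw [card_union_of_disjoint hAC, card_sdiff_of_subset hCS]; omega, ?_⟩
  rw [hTc, card_interedges_union_left _ hAC, card_interedges_union_right _ _ hSC,
    card_interedges_union_right _ _ hSC, hS.card_interedges_compl_eq_zero sdiff_subset hCS,
    card_interedges_comm _ A C]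
  omega

theorem exists_bwidth_lt_of_abs_sub_lt (hS : IsCliqueSide G S) {A : Finset V} (hAS : A ⊆ S)
    (hcut : |(#A : ℤ) - #(Gᶜ.interedges A Sᶜ)| < #(Gᶜ.interedges A (S \ A))) :
    ∃ T : Finset V, #T = #S ∧ bwidth G T < bwidth G S := by
  obtain ⟨C, hCS, hC, hCA⟩ := exists_subset_card_eq_card_filter_eq_min
    (hS.card_eq ▸ card_le_card hAS : #A ≤ #Sᶜ) fun y => nbrCount Gᶜ y A ≠ 0
  rw [← hS.card_interedges_compl_eq_card_filter hAS hCS,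
    ← hS.card_interedges_compl_eq_card_filter hAS subset_rfl] at hCA
  obtain ⟨hT, hcross⟩ := hS.card_interedges_compl_exchange hAS hCS
  refine ⟨A ∪ (Sᶜ \ C), by omega, hS.bwidth_lt_of_lt_card_interedges_compl (by omega) ?_⟩
  rw [card_interedges_comm Gᶜ A Sᶜ] at hcut
  obtain ⟨h₁, h₂⟩ := abs_sub_lt_iff.1 hcut
  rcases min_cases (#A) #(Gᶜ.interedges Sᶜ A) with ⟨h, -⟩ | ⟨h, -⟩ <;>
  · rw [h] at hCA
    omega

theorem exists_bwidth_lt_of_singleton (hS : IsCliqueSide G S) {x : V} (hx : x ∈ S)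
    (hcut : |1 - (nbrCount Gᶜ x Sᶜ : ℤ)| < nbrCount Gᶜ x S) :
    ∃ T : Finset V, #T = #S ∧ bwidth G T < bwidth G S := by
  refine hS.exists_bwidth_lt_of_abs_sub_lt (singleton_subset_iff.2 hx) ?_
  rwa [card_interedges_eq_sum_nbrCount, card_interedges_eq_sum_nbrCount, sum_singleton,
    sum_singleton, card_singleton, nbrCount_sdiff_of_forall_not_adj _ (by simp), Nat.cast_one]

theorem exists_bwidth_lt_of_insert (hS : IsCliqueSide G S) {z w : V} (hz : z ∈ S) (hw : w ∈ S)
    (hzw : Gᶜ.Adj z w) (hzSc : nbrCount Gᶜ z Sᶜ = 0) {B : Finset V} (hBS : B ⊆ S) (hzB : z ∉ B)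
    (hwB : w ∉ B)
    (hcut : |(#B + 1 : ℤ) - #(Gᶜ.interedges B Sᶜ)| ≤ #(Gᶜ.interedges B (S \ insert z B))) :
    ∃ T : Finset V, #T = #S ∧ bwidth G T < bwidth G S := by
  refine hS.exists_bwidth_lt_of_abs_sub_lt (insert_subset hz hBS) ?_
  have hzw' : 1 ≤ nbrCount Gᶜ z (S \ insert z B) := by
    refine card_pos.2 ⟨w, mem_filter.2 ⟨mem_sdiff.2 ⟨hw, ?_⟩, hzw⟩⟩
    simp [hzw.ne', hwB]
  simp only [card_interedges_eq_sum_nbrCount, sum_insert hzB, hzSc, zero_add,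
    card_insert_of_notMem hzB] at hcut ⊢
  push_cast at hcut ⊢ hzw'
  linarith

theorem exists_bwidth_lt_of_pair (hS : IsCliqueSide G S) {z w : V} (hz : z ∈ S) (hw : w ∈ S)
    (hzw : Gᶜ.Adj z w) (hzSc : nbrCount Gᶜ z Sᶜ = 0) {x : V} (hx : x ∈ S) (hxz : x ≠ z)
    (hzx : ¬Gᶜ.Adj z x) (hlow : 2 ≤ nbrCount Gᶜ x S + nbrCount Gᶜ x Sᶜ)
    (hhigh : nbrCount Gᶜ x Sᶜ ≤ nbrCount Gᶜ x S + 2) :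
    ∃ T : Finset V, #T = #S ∧ bwidth G T < bwidth G S := by
  refine hS.exists_bwidth_lt_of_insert hz hw hzw hzSc (singleton_subset_iff.2 hx)
    (by simpa using hxz.symm) (by rintro h; exact hzx (mem_singleton.1 h ▸ hzw)) ?_
  rw [card_interedges_eq_sum_nbrCount, card_interedges_eq_sum_nbrCount, sum_singleton,
    sum_singleton, card_singleton, nbrCount_sdiff_of_forall_not_adj _ ?_, abs_le]
  · constructor <;> push_cast <;> omega
  · simp only [mem_insert, mem_singleton]
    rintro y (rfl | rfl) h
    · exact hzx h.symm
    · exact h.ne rfl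

theorem exists_bwidth_lt_of_insert_zeros (hS : IsCliqueSide G S) {z w : V} (hz : z ∈ S)
    (hw : w ∈ S) (hzw : Gᶜ.Adj z w) (hzSc : nbrCount Gᶜ z Sᶜ = 0) {a : V} (ha : a ∈ S)
    (haz : a ≠ z) (haw : a ≠ w) {N : Finset V} (hNS : N ⊆ S) (hzN : z ∉ N) (hwN : w ∉ N)
    (haN : a ∉ N) (hN : ∀ x ∈ N, nbrCount Gᶜ x Sᶜ = 0) (hcard : #N + 2 = nbrCount Gᶜ a Sᶜ) :
    ∃ T : Finset V, #T = #S ∧ bwidth G T < bwidth G S := by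
  refine hS.exists_bwidth_lt_of_insert hz hw hzw hzSc (insert_subset ha hNS)
    (by simp [haz.symm, hzN]) (by simp [haw.symm, hwN]) ?_
  rw [card_interedges_eq_sum_nbrCount, sum_insert haN, sum_eq_zero hN, add_zero,
    card_insert_of_notMem haN]
  push_cast
  rw [show (#N : ℤ) + 1 + 1 - nbrCount Gᶜ a Sᶜ = 0 by omega, abs_zero]
  positivity

theorem exists_bwidth_lt_of_heavy (hS : IsCliqueSide G S) {z w : V} (hz : z ∈ S) (hw : w ∈ S)
    (hzw : Gᶜ.Adj z w) (hzSc : nbrCount Gᶜ z Sᶜ = 0) (hzx : ∀ x ∈ S, x ≠ w → ¬Gᶜ.Adj z x)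
    {a b : V} (hab : a ≠ b) (ha : a ∈ S) (haz : a ≠ z) (haw : a ≠ w)
    (hca : 2 ≤ nbrCount Gᶜ a Sᶜ) (hb : b ∈ S) (hbz : b ≠ z) (hdb : 2 ≤ Gᶜ.degree b) :
    ∃ T : Finset V, #T = #S ∧ bwidth G T < bwidth G S := by
  set s := S \ {z, a, w}
  have hzaw : {z, a, w} ⊆ S := by simp [insert_subset_iff, hz, ha, hw]
  have hzaw' : z ∉ ({a, w} : Finset V) := by simp [haz.symm, hzw.ne]
  have hs : #s + 3 = #S := by
    have h3 : #({z, a, w} : Finset V) = 3 := by rw [card_insert_of_notMem hzaw', card_pair haw]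
    rw [card_sdiff_of_subset hzaw, h3]
    have := h3 ▸ card_le_card hzaw
    omega
  have hsum : ∑ x ∈ s, nbrCount Gᶜ x Sᶜ + nbrCount Gᶜ a Sᶜ + nbrCount Gᶜ w Sᶜ = #S := by
    rw [← hS.sum_nbrCount_compl_eq_card, ← sum_sdiff hzaw, sum_insert hzaw', sum_pair haw, hzSc]
    ring
  have hcount := card_add_card_filter_two_le_le_card_filter_eq_zero_add_sum s
    fun x => nbrCount Gᶜ x Sᶜ
  by_cases hzeros : nbrCount Gᶜ a Sᶜ - 2 ≤ #(s.filter fun x => nbrCount Gᶜ x Sᶜ = 0)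
  · obtain ⟨N, hNs, hN⟩ := exists_subset_card_eq hzeros
    have hNs' : N ⊆ s := hNs.trans (filter_subset _ _)
    have hnot : ∀ x ∈ ({z, a, w} : Finset V), x ∉ N := fun x hx hxN =>
      (mem_sdiff.1 (hNs' hxN)).2 hx
    exact hS.exists_bwidth_lt_of_insert_zeros hz hw hzw hzSc ha haz haw
      (hNs'.trans sdiff_subset) (hnot z (by simp)) (hnot w (by simp)) (hnot a (by simp))
      (fun x hx => (mem_filter.1 (hNs hx)).2) (by omega)
  have hcw : nbrCount Gᶜ w Sᶜ = 0 := by omega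
  have hle : ∀ x ∈ s, nbrCount Gᶜ x Sᶜ ≤ 1 := by
    have : #(s.filter fun x => 2 ≤ nbrCount Gᶜ x Sᶜ) = 0 := by omega
    rw [card_eq_zero, filter_eq_empty_iff] at this
    exact fun x hx => by have := this hx; omega
  have hdeg := nbrCount_add_nbrCount_compl_eq_degree Gᶜ b S
  by_cases hbw : b = w
  · subst hbw
    refine hS.exists_bwidth_lt_of_singleton hb ?_
    rw [hcw]
    norm_num
    omega
  · have hbs : b ∈ s := by simp [s, hb, hbz, hab.symm, hbw]
    exact hS.exists_bwidth_lt_of_pair hz hw hzw hzSc hb hbz (hzx b hb hbw) (by omega)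
      (by have := hle b hbs; omega)

theorem exists_bwidth_lt (hS : IsCliqueSide G S) {z : V} (hz : z ∈ S)
    (hzSc : nbrCount Gᶜ z Sᶜ = 0) (hzS : nbrCount Gᶜ z S = 1) {a b : V} (hab : a ≠ b)
    (ha : a ∈ S) (haz : a ≠ z) (hb : b ∈ S) (hbz : b ≠ z) (hda : 2 ≤ Gᶜ.degree a)
    (hdb : 2 ≤ Gᶜ.degree b) :
    ∃ T : Finset V, #T = #S ∧ bwidth G T < bwidth G S := by
  obtain ⟨w, hfilter⟩ := card_eq_one.1 hzS
  obtain ⟨hw, hzw⟩ := mem_filter.1 (hfilter ▸ mem_singleton_self w)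
  have hzx : ∀ x ∈ S, x ≠ w → ¬Gᶜ.Adj z x := fun x hx hxw h =>
    hxw (mem_singleton.1 (hfilter ▸ mem_filter.2 ⟨hx, h⟩))
  wlog haw : a ≠ w generalizing a b
  · exact this hab.symm hb hbz ha haz hdb hda (not_not.1 haw ▸ hab.symm)
  have hdeg := nbrCount_add_nbrCount_compl_eq_degree Gᶜ a S
  by_cases hpair : nbrCount Gᶜ a Sᶜ ≤ nbrCount Gᶜ a S + 2
  · exact hS.exists_bwidth_lt_of_pair hz hw hzw hzSc ha haz (hzx a ha haw) (by omega) hpair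
  · exact hS.exists_bwidth_lt_of_heavy hz hw hzw hzSc hzx hab ha haz haw (by omega) hb hbz hdb

end IsCliqueSide

theorem nbrCount_compl_of_degree_of_defic_eq_neg_two [Fintype V] [DecidableEq V]
    {G : SimpleGraph V} [DecidableRel G.Adj] {S : Finset V} (hbal : #S = #Sᶜ) {z : V}
    (hz : z ∈ S) (hdeg : G.degree z = Fintype.card V - 2) (hdef : defic G S z = -2) :
    nbrCount Gᶜ z Sᶜ = 0 ∧ nbrCount Gᶜ z S = 1 := by
  rw [defic, if_pos hz] at hdef
  have := nbrCount_add_nbrCount_compl_eq_degree G z S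
  have := nbrCount_add_nbrCount_compl_eq_degree Gᶜ z S
  have := nbrCount_add_nbrCount_compl_eq_card G (notMem_compl.2 hz)
  have := degree_add_degree_compl G z
  have := card_add_card_compl S
  omega

/-- in an even-order non-extremal graph, a bisection whose side S̄ is a
clique with all deficiencies 0 while S contains a vertex of degree n−2 and deficiency −2
is not a minimum bisection: a strictly narrower bisection exists. -/
theorem stmt15 [Fintype V] [DecidableEq V] (G : SimpleGraph V) [DecidableRel G.Adj]
    (heven : Even (Fintype.card V))
    (S : Finset V) (hcard : S.card = Fintype.card V / 2)
    (z : V) (hz : z ∈ S) (hdegz : G.degree z = Fintype.card V - 2)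
    (hdefz : defic G S z = -2)
    (hclique : ∀ y ∈ Sᶜ, ∀ y' ∈ Sᶜ, y ≠ y' → G.Adj y y')
    (hdef0 : ∀ y ∈ Sᶜ, defic G S y = 0)
    (hnonext : ∃ a b : V, a ≠ b ∧ G.degree a < Fintype.card V - 2 ∧
      G.degree b < Fintype.card V - 2) :
    ∃ T : Finset V, T.card = Fintype.card V / 2 ∧ bwidth G T < bwidth G S := by
  have hbal : #S = #Sᶜ := by
    rw [card_compl, hcard]
    obtain ⟨k, hk⟩ := heven
    omega
  have hS := IsCliqueSide.of_defic_eq_zero hbal hclique hdef0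
  obtain ⟨hzSc, hzS⟩ := nbrCount_compl_of_degree_of_defic_eq_neg_two hbal hz hdegz hdefz
  have hlow : ∀ x, G.degree x < Fintype.card V - 2 → 2 ≤ Gᶜ.degree x ∧ x ∈ S ∧ x ≠ z := by
    intro x hx
    have hdx : 2 ≤ Gᶜ.degree x := by
      have := degree_add_degree_compl G x
      omega
    refine ⟨hdx, by_contra fun h => ?_, ?_⟩
    · have := hS.degree_compl_eq_one (mem_compl.2 h)
      omega
    · rintro rfl
      have := nbrCount_add_nbrCount_compl_eq_degree Gᶜ x S
      omega
  obtain ⟨a, b, hab, ha, hb⟩ := hnonext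
  obtain ⟨hda, haS, haz⟩ := hlow a ha
  obtain ⟨hdb, hbS, hbz⟩ := hlow b hb
  rw [← hcard]
  exact hS.exists_bwidth_lt hz hzSc hzS hab haS haz hbS hbz hda hdb
end

section
/- Let G be a graph on an even number n ≥ 2 of vertices admitting a bisection S = (S,S̄) such that: every x ∈ S has def(x) ≥ −1, there exist two non-adjacent vertices u, v ∈ S, there is a vertex z ∈ S̄ with def(z) ≤ 0 adjacent to both u and v, and every x ∈ S with def(x) = −1 is adjacent to z. Then G is mbM: the profile assigning preference 1 to z and to S∖{u,v}, and 0 to everyone else, has exactly n/2 − 1 ones (a strict minority); u and v are unhappy and successively flip to 1, after which all n/2 + 1 vertices with preference 1 are not unhappy; hence any reachable stable profile has at least n/2 + 1 vertices with preference 1. -/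
/-!
Start from the profile in which exactly `z` and `S \ {u, v}` prefer 1, a strict minority.
Having lost its own side and gained the opposite neighbour `z`, the vertex `u` has deficiency
`-def(u) - 2 < 0` and flips; then the same happens to `v`, giving the profile `S ∪ {z}`.
There every vertex preferring 1 has nonnegative deficiency: each `x ∈ S` gains 2 from `z` when
adjacent to it (and only those with `def(x) ≥ 0` are not), and `z` has deficiency `-def(z) ≥ 0`.
Updates preserve this, so the dynamics only adds 1s and stabilises with at most `n/2 - 1` zeros.
-/

open Finset

variable {V : Type*}

section Deficiency

variable [Fintype V] [DecidableEq V] {G : SimpleGraph V} [DecidableRel G.Adj]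
  {A : Finset V} {a x : V}

lemma nbrCount_insert (ha : a ∉ A) :
    nbrCount G x (insert a A) = nbrCount G x A + if G.Adj x a then 1 else 0 := by
  unfold nbrCount
  rw [filter_insert]
  split_ifs with hxa
  · exact card_insert_of_notMem fun h => ha (mem_filter.1 h).1
  · rfl

lemma nbrCount_erase (ha : a ∈ A) :
    nbrCount G x (A.erase a) + (if G.Adj x a then 1 else 0) = nbrCount G x A := by
  rw [← nbrCount_insert (notMem_erase a A), insert_erase ha]

lemma defic_compl (A : Finset V) : defic G Aᶜ = defic G A := by
  funext x
  unfold defic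
  by_cases hx : x ∈ A <;> simp [hx]

lemma defic_insert (ha : a ∉ A) (hxa : x ≠ a) :
    defic G (insert a A) x =
      defic G A x + if G.Adj x a then (if x ∈ A then 2 else -2) else 0 := by
  have hins := nbrCount_insert (G := G) (x := x) ha
  have hera := nbrCount_erase (G := G) (x := x) (mem_compl.2 ha)
  by_cases hx : x ∈ A
  · rw [defic, defic, if_pos (mem_insert_of_mem hx), if_pos hx, compl_insert]
    split_ifs at hins hera ⊢ <;> omega
  · rw [defic, defic, if_neg (by simp [hx, hxa]), if_neg hx, compl_insert]
    split_ifs at hins hera ⊢ <;> omega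

lemma defic_insert_self (ha : a ∉ A) : defic G (insert a A) a = -defic G A a := by
  have hins := nbrCount_insert (G := G) (x := a) ha
  have hera := nbrCount_erase (G := G) (x := a) (mem_compl.2 ha)
  rw [defic, defic, if_pos (mem_insert_self a A), if_neg ha, compl_insert]
  simp only [G.irrefl, if_false, add_zero] at hins hera
  omega

lemma defic_erase (ha : a ∈ A) (hxa : x ≠ a) :
    defic G (A.erase a) x =
      defic G A x + if G.Adj x a then (if x ∈ A then -2 else 2) else 0 := by
  rw [← defic_compl, compl_erase, defic_insert (notMem_compl.2 ha) hxa, defic_compl]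
  by_cases hx : x ∈ A <;> simp [hx]

lemma defic_erase_self (ha : a ∈ A) : defic G (A.erase a) a = -defic G A a := by
  rw [← defic_compl, compl_erase, defic_insert_self (notMem_compl.2 ha), defic_compl]

end Deficiency

section Dynamics

variable [Fintype V] [DecidableEq V] {G : SimpleGraph V} [DecidableRel G.Adj]
  {A : Finset V} {x : V}

def profileOf (A : Finset V) : V → Bool := fun y => decide (y ∈ A)

lemma zerosCount_profileOf (A : Finset V) : zerosCount (profileOf A) = Aᶜ.card := by
  unfold zerosCount profileOf
  congr 1
  ext y
  simp

lemma unhappy_profileOf_iff : Unhappy G (profileOf A) x ↔ defic G A x < 0 := by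
  unfold Unhappy defic nbrCount profileOf
  by_cases hx : x ∈ A
  · have hsame : univ.filter (fun y => G.Adj x y ∧ decide (y ∈ A) = decide (x ∈ A))
        = A.filter (G.Adj x) := by ext y; simp [hx, and_comm]
    have hdiff : univ.filter (fun y => G.Adj x y ∧ decide (y ∈ A) ≠ decide (x ∈ A))
        = Aᶜ.filter (G.Adj x) := by ext y; simp [hx, and_comm]
    rw [hsame, hdiff, if_pos hx, sub_neg, Nat.cast_lt]
  · have hsame : univ.filter (fun y => G.Adj x y ∧ decide (y ∈ A) = decide (x ∈ A))
        = Aᶜ.filter (G.Adj x) := by ext y; simp [hx, and_comm]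
    have hdiff : univ.filter (fun y => G.Adj x y ∧ decide (y ∈ A) ≠ decide (x ∈ A))
        = A.filter (G.Adj x) := by ext y; simp [hx, and_comm]
    rw [hsame, hdiff, if_neg hx, sub_neg, Nat.cast_lt]

lemma flipStep_profileOf_insert (hx : x ∉ A) (hneg : defic G A x < 0) :
    FlipStep G (profileOf A) (profileOf (insert x A)) := by
  refine ⟨x, unhappy_profileOf_iff.2 hneg, ?_⟩
  funext y
  by_cases hy : y = x
  · subst hy; simp [profileOf, hx]
  · simp [profileOf, hy]

/-- Only 0-vertices are unhappy, and flipping one to 1 does not lower the deficiency of any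
other 1-vertex and makes its own positive. -/
theorem exists_stable_of_defic_nonneg (A : Finset V) (hA : ∀ w ∈ A, 0 ≤ defic G A w) :
    ∃ t, ReachesProf G (profileOf A) t ∧ StableProf G t ∧ zerosCount t ≤ Aᶜ.card := by
  by_cases hstable : StableProf G (profileOf A)
  · exact ⟨_, .refl, hstable, (zerosCount_profileOf A).le⟩
  obtain ⟨x, hx⟩ : ∃ x, Unhappy G (profileOf A) x := by
    simpa [StableProf] using hstable
  have hneg := unhappy_profileOf_iff.1 hx
  have hxA : x ∉ A := fun h => (hA x h).not_gt hneg
  have hA' : ∀ w ∈ insert x A, 0 ≤ defic G (insert x A) w := by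
    intro w hw
    by_cases hwx : w = x
    · subst hwx; rw [defic_insert_self hxA]; omega
    · have hwA : w ∈ A := (mem_insert.1 hw).resolve_left hwx
      have hwnonneg := hA w hwA
      rw [defic_insert hxA hwx]
      split_ifs <;> omega
  obtain ⟨t, hreach, hstab, hzeros⟩ := exists_stable_of_defic_nonneg (insert x A) hA'
  have hcompl : (insert x A)ᶜ.card ≤ Aᶜ.card :=
    card_le_card (compl_subset_compl.2 (subset_insert x A))
  exact ⟨t, .head (flipStep_profileOf_insert hxA hneg) hreach, hstab, hzeros.trans hcompl⟩
termination_by Aᶜ.card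
decreasing_by rw [compl_insert]; exact card_erase_lt_of_mem (mem_compl.2 hxA)

end Dynamics

section M1Bisection

variable [Fintype V] [DecidableEq V] {G : SimpleGraph V} [DecidableRel G.Adj]
  {S : Finset V} {u v z : V}

lemma defic_insert_nonneg (hdefS : ∀ x ∈ S, -1 ≤ defic G S x) (hz : z ∉ S)
    (hdz : defic G S z ≤ 0) (hm1 : ∀ x ∈ S, defic G S x = -1 → G.Adj x z) :
    ∀ w ∈ insert z S, 0 ≤ defic G (insert z S) w := by
  intro w hw
  rcases mem_insert.1 hw with rfl | hwS
  · rw [defic_insert_self hz]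
    omega
  · rw [defic_insert hz (ne_of_mem_of_not_mem hwS hz), if_pos hwS]
    have hw1 := hdefS w hwS
    by_cases hwz : G.Adj w z
    · simp only [hwz, if_true]
      omega
    · have hw2 : defic G S w ≠ -1 := fun h => hwz (hm1 w hwS h)
      simp only [hwz, if_false]
      omega

lemma reachesProf_insert_of_flip_pair (hdefS : ∀ x ∈ S, -1 ≤ defic G S x)
    (hu : u ∈ S) (hv : v ∈ S) (huv : u ≠ v) (hnadj : ¬ G.Adj u v) (hz : z ∉ S)
    (hzu : G.Adj z u) (hzv : G.Adj z v) :
    ReachesProf G (profileOf (insert z ((S.erase u).erase v))) (profileOf (insert z S)) := by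
  set B := (S.erase u).erase v
  have hvSu : v ∈ S.erase u := mem_erase.2 ⟨huv.symm, hv⟩
  have hzB : z ∉ B := fun h => hz (mem_of_mem_erase (mem_of_mem_erase h))
  have huz : u ≠ z := ne_of_mem_of_not_mem hu hz
  have hvz : v ≠ z := ne_of_mem_of_not_mem hv hz
  have hvu : ¬ G.Adj v u := fun h => hnadj h.symm
  have huA : u ∉ insert z B := by simp [B, huz]
  have hvA : v ∉ insert u (insert z B) := by simp [B, huv.symm, hvz]
  have hdefu : defic G (insert z B) u < 0 := by
    rw [defic_insert hzB huz, defic_erase hvSu huv, defic_erase_self hu]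
    simp only [B, hzu.symm, hnadj, if_true, if_false, mem_erase, ne_eq, not_true_eq_false,
      false_and, and_false]
    linarith [hdefS u hu]
  have hdefv : defic G (insert u (insert z B)) v < 0 := by
    rw [defic_insert huA huv.symm, defic_insert hzB hvz, defic_erase_self hvSu,
      defic_erase hu huv.symm]
    simp only [B, hzv.symm, hvu, if_true, if_false, mem_erase, ne_eq, not_true_eq_false,
      false_and]
    linarith [hdefS v hv]
  have hfinal : insert v (insert u (insert z B)) = insert z S := by
    ext w
    simp only [B, mem_insert, mem_erase]
    grind
  rw [← hfinal]
  exact .tail (.single (flipStep_profileOf_insert huA hdefu))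
    (flipStep_profileOf_insert hvA hdefv)

end M1Bisection

theorem stmt16_general [Fintype V] [DecidableEq V] (G : SimpleGraph V) [DecidableRel G.Adj]
    (S : Finset V) (hcard : S.card = Fintype.card V / 2)
    (hdefS : ∀ x ∈ S, -1 ≤ defic G S x)
    (u v : V) (hu : u ∈ S) (hv : v ∈ S) (huv : u ≠ v) (hnadj : ¬ G.Adj u v)
    (z : V) (hz : z ∉ S) (hdz : defic G S z ≤ 0)
    (hzu : G.Adj z u) (hzv : G.Adj z v)
    (hm1 : ∀ x ∈ S, defic G S x = -1 → G.Adj x z) :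
    MbM G := by
  have hvSu : v ∈ S.erase u := mem_erase.2 ⟨huv.symm, hv⟩
  have hzB : z ∉ (S.erase u).erase v := fun h => hz (mem_of_mem_erase (mem_of_mem_erase h))
  have hcardB : ((S.erase u).erase v).card + 1 + 1 = S.card := by
    rw [card_erase_add_one hvSu, card_erase_add_one hu]
  obtain ⟨t, hreach, hstable, hzeros⟩ :=
    exists_stable_of_defic_nonneg (insert z S) (defic_insert_nonneg hdefS hz hdz hm1)
  refine ⟨profileOf (insert z ((S.erase u).erase v)), ?_, t,
    (reachesProf_insert_of_flip_pair hdefS hu hv huv hnadj hz hzu hzv).trans hreach,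
    hstable, ?_⟩
  · rw [zerosCount_profileOf, card_compl, card_insert_of_notMem hzB]
    omega
  · rw [card_compl, card_insert_of_notMem hz] at hzeros
    omega

/-- M1 bisections: an even-order graph with a bisection in which all
S-deficiencies are ≥ −1, S contains two non-adjacent vertices u, v both adjacent to a
vertex z ∈ S̄ with deficiency ≤ 0, and every deficiency −1 vertex of S is adjacent to z,
is mbM. -/
theorem stmt16 [Fintype V] [DecidableEq V] (G : SimpleGraph V) [DecidableRel G.Adj]
    (heven : Even (Fintype.card V))
    (S : Finset V) (hcard : S.card = Fintype.card V / 2)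
    (hdefS : ∀ x ∈ S, -1 ≤ defic G S x)
    (u v : V) (hu : u ∈ S) (hv : v ∈ S) (huv : u ≠ v) (hnadj : ¬ G.Adj u v)
    (z : V) (hz : z ∉ S) (hdz : defic G S z ≤ 0)
    (hzu : G.Adj z u) (hzv : G.Adj z v)
    (hm1 : ∀ x ∈ S, defic G S x = -1 → G.Adj x z) :
    MbM G :=
  stmt16_general G S hcard hdefS u v hu hv huv hnadj z hz hdz hzu hzv hm1
end

section
/- Let G be a graph on n vertices with a minimum bisection S = (S,S̄) (|S| = ⌈n/2⌉), n odd, in which every x ∈ S has def(x) = 0, some vertex v ∈ S̄ has def(v) = −2 (hence v is adjacent to all of S), and S contains two non-adjacent vertices u and w. Then the partition T = (S ∪ {v} ∖ {u}, S̄ ∪ {u} ∖ {v}) satisfies: def_T(v) = 0, def_T(x) ≥ 0 for all x ∈ T, and def_T(w) ≥ 2. Consequently (by the positive-deficiency lemma) G is mbM. -/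
open Finset

variable {V : Type*}

section Helpers
variable [Fintype V] [DecidableEq V] (G : SimpleGraph V) [DecidableRel G.Adj]

lemma nbr_insert (x a : V) (A : Finset V) (ha : a ∉ A) :
    nbrCount G x (insert a A) = nbrCount G x A + if G.Adj x a then 1 else 0 := by
  unfold nbrCount
  rw [Finset.filter_insert]
  split
  · rw [Finset.card_insert_of_notMem (fun h => ha (Finset.mem_of_mem_filter a h))]
  · simp

lemma nbr_erase (x a : V) (A : Finset V) (ha : a ∈ A) :
    nbrCount G x A = nbrCount G x (A.erase a) + if G.Adj x a then 1 else 0 := by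
  conv_lhs => rw [← Finset.insert_erase ha]
  exact nbr_insert G x a _ (Finset.notMem_erase a A)

lemma nbr_self_erase (x : V) (A : Finset V) :
    nbrCount G x (A.erase x) = nbrCount G x A := by
  by_cases hx : x ∈ A
  · rw [nbr_erase G x x A hx, if_neg (G.irrefl), Nat.add_zero]
  · rw [Finset.erase_eq_of_notMem hx]

lemma sum_ind (a : V) (A : Finset V) :
    ∑ x ∈ A, (if G.Adj x a then (1:ℕ) else 0) = nbrCount G a A := by
  unfold nbrCount
  rw [Finset.card_filter]
  exact Finset.sum_congr rfl (fun x _ => by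
    by_cases h : G.Adj a x
    · rw [if_pos h, if_pos (h.symm)]
    · rw [if_neg h, if_neg (fun h' => h h'.symm)])

end Helpers
section Swap
variable [Fintype V] [DecidableEq V] (G : SimpleGraph V) [DecidableRel G.Adj]

lemma sum_ind_int (a : V) (A : Finset V) :
    ∑ x ∈ A, (if G.Adj x a then (1:ℤ) else 0) = (nbrCount G a A : ℤ) := by
  rw [← sum_ind G a A]
  push_cast
  rfl

lemma compl_swap {u v : V} {S : Finset V} (hu : u ∈ S) (hv : v ∉ S) :
    (insert v (S.erase u))ᶜ = insert u (Sᶜ.erase v) := by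
  have huv : u ≠ v := fun h => hv (h ▸ hu)
  ext x
  by_cases hx : x = u
  · subst hx; simp [hu, huv, Finset.mem_compl]
  · by_cases hy : x = v
    · subst hy; simp [hv, Ne.symm huv, Finset.mem_compl]
    · simp [hx, hy, Finset.mem_compl]


lemma bwidth_swap (u v : V) (S : Finset V) (hu : u ∈ S) (hv : v ∉ S) :
    (bwidth G (insert v (S.erase u)) : ℤ) =
    (bwidth G S : ℤ) + defic G S u + defic G S v + 2 * (if G.Adj u v then 1 else 0) := by
  have huv : u ≠ v := fun h => hv (h ▸ hu)
  have hvS : v ∉ S.erase u := fun h => hv (Finset.mem_of_mem_erase h)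
  have hTc : (insert v (S.erase u))ᶜ = insert u (Sᶜ.erase v) := compl_swap hu hv
  have hunotc : u ∉ Sᶜ.erase v := fun h => (Finset.mem_compl.mp (Finset.mem_of_mem_erase h)) hu
  have hvc : v ∈ Sᶜ := Finset.mem_compl.mpr hv
  have key : ∀ x : V, (nbrCount G x (insert u (Sᶜ.erase v)) : ℤ)
      = (nbrCount G x Sᶜ : ℤ) - (if G.Adj x v then 1 else 0) + (if G.Adj x u then 1 else 0) := by
    intro x
    rw [nbr_insert G x u _ hunotc, nbr_erase G x v Sᶜ hvc]
    push_cast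
    ring
  have hsum : ∑ x ∈ S.erase u, (nbrCount G x (insert u (Sᶜ.erase v)) : ℤ)
      = (∑ x ∈ S.erase u, (nbrCount G x Sᶜ : ℤ))
        - (nbrCount G v (S.erase u) : ℤ) + (nbrCount G u (S.erase u) : ℤ) := by
    rw [Finset.sum_congr rfl (fun x _ => key x), ← sum_ind_int G v (S.erase u),
      ← sum_ind_int G u (S.erase u)]
    rw [Finset.sum_add_distrib, Finset.sum_sub_distrib]
  have h1 : (nbrCount G u (S.erase u) : ℤ) = (nbrCount G u S : ℤ) := by
    rw [nbr_self_erase]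
  have h2 : (nbrCount G v S : ℤ) = (nbrCount G v (S.erase u) : ℤ) + (if G.Adj v u then 1 else 0) := by
    rw [nbr_erase G v u S hu]; push_cast; rfl
  have h3 : (nbrCount G v (insert u (Sᶜ.erase v)) : ℤ)
      = (nbrCount G v Sᶜ : ℤ) + (if G.Adj v u then 1 else 0) := by
    rw [nbr_insert G v u _ hunotc, nbr_self_erase]; push_cast; rfl
  have h4 : (∑ x ∈ S, (nbrCount G x Sᶜ : ℤ))
      = (∑ x ∈ S.erase u, (nbrCount G x Sᶜ : ℤ)) + (nbrCount G u Sᶜ : ℤ) := by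
    rw [← Finset.add_sum_erase S _ hu]; ring
  have hcomm : (if G.Adj v u then (1:ℤ) else 0) = (if G.Adj u v then 1 else 0) := by
    by_cases h : G.Adj u v
    · rw [if_pos h, if_pos h.symm]
    · rw [if_neg h, if_neg (fun h' => h h'.symm)]
  unfold bwidth defic
  rw [hTc, Finset.sum_insert hvS, if_pos hu, if_neg hv]
  push_cast
  rw [hsum, h3]
  have hb : (bwidth G S : ℤ) = ∑ x ∈ S, (nbrCount G x Sᶜ : ℤ) := by
    unfold bwidth; push_cast; rfl
  linarith [h1, h2, h4, hcomm]

end Swap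
section Descent
variable [Fintype V] [DecidableEq V] (G : SimpleGraph V) [DecidableRel G.Adj]

lemma card_filter_adj (x : V) (A : Finset V) :
    (univ.filter (fun y => G.Adj x y ∧ y ∈ A)).card = nbrCount G x A := by
  unfold nbrCount
  congr 1
  ext y
  simp [and_comm]

/-- If `s x = true` and the "false-neighbors ≤ true-neighbors" condition holds,
then `x` is not unhappy. -/
lemma not_unhappy_of_true (s : V → Bool) (x : V) (hx : s x = true)
    (h : (univ.filter (fun y => G.Adj x y ∧ s y = false)).card ≤
         (univ.filter (fun y => G.Adj x y ∧ s y = true)).card) :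
    ¬ Unhappy G s x := by
  unfold Unhappy
  rw [not_lt]
  have e1 : (univ.filter (fun y => G.Adj x y ∧ s y = s x))
      = (univ.filter (fun y => G.Adj x y ∧ s y = true)) := by
    simp only [hx]
  have e2 : (univ.filter (fun y => G.Adj x y ∧ s y ≠ s x))
      = (univ.filter (fun y => G.Adj x y ∧ s y = false)) := by
    simp only [hx, ne_eq, Bool.not_eq_true]
  rw [e1, e2]
  exact h

lemma descent (n : ℕ) :
    ∀ (s : V → Bool), zerosCount s ≤ n →
    (∀ x, s x = true →
      (univ.filter (fun y => G.Adj x y ∧ s y = false)).card ≤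
      (univ.filter (fun y => G.Adj x y ∧ s y = true)).card) →
    ∃ t, ReachesProf G s t ∧ StableProf G t ∧ ∀ x, s x = true → t x = true := by
  induction n with
  | zero =>
    intro s hz hinv
    refine ⟨s, Relation.ReflTransGen.refl, ?_, fun x h => h⟩
    intro x
    have hxt : s x = true := by
      by_contra hxf
      rw [Bool.not_eq_true] at hxf
      have hmem : x ∈ univ.filter (fun z => s z = false) := by
        simp [hxf]
      have := Finset.card_pos.mpr ⟨x, hmem⟩
      unfold zerosCount at hz
      omega
    exact not_unhappy_of_true G s x hxt (hinv x hxt)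
  | succ n ih =>
    intro s hz hinv
    by_cases hstab : StableProf G s
    · exact ⟨s, Relation.ReflTransGen.refl, hstab, fun x h => h⟩
    simp only [StableProf, not_forall, not_not] at hstab
    obtain ⟨x, hx⟩ := hstab
    have hxf : s x = false := by
      cases hsx : s x
      · rfl
      · exact absurd hx (not_unhappy_of_true G s x hsx (hinv x hsx))
    set s' := Function.update s x (!s x) with hs'def
    have hs'x : s' x = true := by simp [hs'def, hxf]
    have hs'ne : ∀ y, y ≠ x → s' y = s y := fun y hy => Function.update_of_ne hy _ s
    -- zeros strictly decrease
    have hset : univ.filter (fun z => s' z = false)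
        = (univ.filter (fun z => s z = false)).erase x := by
      ext z
      by_cases hzx : z = x
      · subst hzx; simp [hs'x]
      · simp [hs'ne z hzx, hzx]
    have hxmem : x ∈ univ.filter (fun z => s z = false) := by simp [hxf]
    have hzero : zerosCount s' < zerosCount s := by
      unfold zerosCount
      rw [hset, Finset.card_erase_of_mem hxmem]
      have := Finset.card_pos.mpr ⟨x, hxmem⟩
      omega
    -- invariant is preserved
    have hinv' : ∀ y, s' y = true →
        (univ.filter (fun z => G.Adj y z ∧ s' z = false)).card ≤
        (univ.filter (fun z => G.Adj y z ∧ s' z = true)).card := by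
      intro y hy
      by_cases hyx : y = x
      · subst hyx
        have eT : univ.filter (fun z => G.Adj y z ∧ s' z = true)
            = univ.filter (fun z => G.Adj y z ∧ s z = true) := by
          ext z
          by_cases hzy : z = y
          · subst hzy; simp [G.irrefl]
          · simp [hs'ne z hzy]
        have eF : univ.filter (fun z => G.Adj y z ∧ s' z = false)
            = univ.filter (fun z => G.Adj y z ∧ s z = false) := by
          ext z
          by_cases hzy : z = y
          · subst hzy; simp [G.irrefl]
          · simp [hs'ne z hzy]
        rw [eT, eF]
        -- from unhappiness of y (= x) with s y = false
        unfold Unhappy at hx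
        have e1 : (univ.filter (fun z => G.Adj y z ∧ s z = s y))
            = (univ.filter (fun z => G.Adj y z ∧ s z = false)) := by
          simp only [hxf]
        have e2 : (univ.filter (fun z => G.Adj y z ∧ s z ≠ s y))
            = (univ.filter (fun z => G.Adj y z ∧ s z = true)) := by
          simp only [hxf, ne_eq, Bool.not_eq_false]
        rw [e1, e2] at hx
        exact le_of_lt hx
      · have hsy : s y = true := by rw [← hs'ne y hyx]; exact hy
        have h1 : univ.filter (fun z => G.Adj y z ∧ s' z = false)
            ⊆ univ.filter (fun z => G.Adj y z ∧ s z = false) := by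
          intro z hzmem
          simp only [Finset.mem_filter, Finset.mem_univ, true_and] at hzmem ⊢
          rcases hzmem with ⟨hadj, hzf⟩
          by_cases hzx : z = x
          · subst hzx; rw [hs'x] at hzf; exact absurd hzf (by simp)
          · exact ⟨hadj, by rw [← hs'ne z hzx]; exact hzf⟩
        have h2 : univ.filter (fun z => G.Adj y z ∧ s z = true)
            ⊆ univ.filter (fun z => G.Adj y z ∧ s' z = true) := by
          intro z hzmem
          simp only [Finset.mem_filter, Finset.mem_univ, true_and] at hzmem ⊢
          rcases hzmem with ⟨hadj, hzt⟩
          by_cases hzx : z = x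
          · subst hzx; exact ⟨hadj, hs'x⟩
          · exact ⟨hadj, by rw [hs'ne z hzx]; exact hzt⟩
        calc (univ.filter (fun z => G.Adj y z ∧ s' z = false)).card
            ≤ (univ.filter (fun z => G.Adj y z ∧ s z = false)).card :=
              Finset.card_le_card h1
          _ ≤ (univ.filter (fun z => G.Adj y z ∧ s z = true)).card := hinv y hsy
          _ ≤ (univ.filter (fun z => G.Adj y z ∧ s' z = true)).card :=
              Finset.card_le_card h2
    obtain ⟨t, ht1, ht2, ht3⟩ := ih s' (by omega) hinv'
    refine ⟨t, Relation.ReflTransGen.head ⟨x, hx, rfl⟩ ht1, ht2, fun y hy => ?_⟩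
    by_cases hyx : y = x
    · exact ht3 y (by rw [hyx]; exact hs'x)
    · exact ht3 y (by rw [hs'ne y hyx]; exact hy)

end Descent
section DeficSwap
variable [Fintype V] [DecidableEq V] (G : SimpleGraph V) [DecidableRel G.Adj]

lemma defic_swap_new (u v : V) (S : Finset V) (hu : u ∈ S) (hv : v ∉ S) :
    defic G (insert v (S.erase u)) v
      = -(defic G S v) - 2 * (if G.Adj v u then 1 else 0) := by
  have hvS : v ∉ S.erase u := fun h => hv (Finset.mem_of_mem_erase h)
  have hTc := compl_swap hu hv
  have hunotc : u ∉ Sᶜ.erase v := fun h =>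
    (Finset.mem_compl.mp (Finset.mem_of_mem_erase h)) hu
  have h1 : (nbrCount G v (insert v (S.erase u)) : ℤ)
      = (nbrCount G v S : ℤ) - (if G.Adj v u then 1 else 0) := by
    rw [nbr_insert G v v _ hvS, if_neg (G.irrefl (v := v)), nbr_erase G v u S hu]
    push_cast
    ring
  have h2 : (nbrCount G v ((insert v (S.erase u))ᶜ) : ℤ)
      = (nbrCount G v Sᶜ : ℤ) + (if G.Adj v u then 1 else 0) := by
    rw [hTc, nbr_insert G v u _ hunotc, nbr_self_erase]
    push_cast
    rfl
  unfold defic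
  rw [if_pos (Finset.mem_insert_self v _), if_neg hv, h1, h2]
  ring

lemma defic_swap_old (u v x : V) (S : Finset V) (hu : u ∈ S) (hv : v ∉ S)
    (hx : x ∈ S.erase u) :
    defic G (insert v (S.erase u)) x
      = defic G S x + 2 * (if G.Adj x v then 1 else 0)
        - 2 * (if G.Adj x u then 1 else 0) := by
  have hvS : v ∉ S.erase u := fun h => hv (Finset.mem_of_mem_erase h)
  have hxS : x ∈ S := Finset.mem_of_mem_erase hx
  have hTc := compl_swap hu hv
  have hunotc : u ∉ Sᶜ.erase v := fun h =>
    (Finset.mem_compl.mp (Finset.mem_of_mem_erase h)) hu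
  have hvc : v ∈ Sᶜ := Finset.mem_compl.mpr hv
  have h1 : (nbrCount G x (insert v (S.erase u)) : ℤ)
      = (nbrCount G x S : ℤ) - (if G.Adj x u then 1 else 0)
        + (if G.Adj x v then 1 else 0) := by
    rw [nbr_insert G x v _ hvS, nbr_erase G x u S hu]
    push_cast
    ring
  have h2 : (nbrCount G x ((insert v (S.erase u))ᶜ) : ℤ)
      = (nbrCount G x Sᶜ : ℤ) - (if G.Adj x v then 1 else 0)
        + (if G.Adj x u then 1 else 0) := by
    rw [hTc, nbr_insert G x u _ hunotc, nbr_erase G x v Sᶜ hvc]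
    push_cast
    ring
  unfold defic
  rw [if_pos (Finset.mem_insert_of_mem hx), if_pos hxS, h1, h2]
  ring

end DeficSwap
/-- in an odd-order graph with a minimum bisection whose larger side S has
all deficiencies 0, a vertex v ∈ S̄ of deficiency −2 (hence adjacent to all of S), and two
non-adjacent vertices u, w ∈ S, the swapped partition T = S ∪ {v} ∖ {u} satisfies
def_T(v) = 0, def_T(x) ≥ 0 for all x ∈ T, and def_T(w) ≥ 2; consequently G is mbM. -/
theorem stmt18 [Fintype V] [DecidableEq V] (G : SimpleGraph V) [DecidableRel G.Adj]
    (hodd : Odd (Fintype.card V))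
    (S : Finset V) (hmin : IsMinBisection G S)
    (hdefS : ∀ x ∈ S, defic G S x = 0)
    (v : V) (hv : v ∉ S) (hdefv : defic G S v = -2)
    (u w : V) (hu : u ∈ S) (hw : w ∈ S) (huw : u ≠ w) (hnadj : ¬ G.Adj u w) :
    (∀ x ∈ S, G.Adj v x) ∧
    defic G (insert v (S.erase u)) v = 0 ∧
    (∀ x ∈ insert v (S.erase u), 0 ≤ defic G (insert v (S.erase u)) x) ∧
    2 ≤ defic G (insert v (S.erase u)) w ∧
    MbM G := by
  obtain ⟨hcard, hminw⟩ := hmin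
  -- Part 1 : v is adjacent to every vertex of S
  have part1 : ∀ x ∈ S, G.Adj v x := by
    intro x hx
    have hx_ne : v ∉ S.erase x := fun h => hv (Finset.mem_of_mem_erase h)
    have hcard' : (insert v (S.erase x)).card = S.card := by
      rw [Finset.card_insert_of_notMem hx_ne, Finset.card_erase_of_mem hx]
      have : 1 ≤ S.card := Finset.card_pos.mpr ⟨x, hx⟩
      omega
    have hle : bwidth G S ≤ bwidth G (insert v (S.erase x)) := hminw _ hcard'
    have hsw := bwidth_swap G x v S hx hv
    rw [hdefS x hx, hdefv] at hsw
    by_contra hadj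
    have hnegadj : ¬ G.Adj x v := fun h => hadj h.symm
    rw [if_neg hnegadj] at hsw
    have hle' : (bwidth G S : ℤ) ≤ (bwidth G (insert v (S.erase x)) : ℤ) := by
      exact_mod_cast hle
    linarith
  have hadjvu : G.Adj v u := part1 u hu
  -- Part 2
  have part2 : defic G (insert v (S.erase u)) v = 0 := by
    rw [defic_swap_new G u v S hu hv, hdefv, if_pos hadjvu]
    ring
  -- Part 3
  have part3 : ∀ x ∈ insert v (S.erase u), 0 ≤ defic G (insert v (S.erase u)) x := by
    intro x hx
    rcases Finset.mem_insert.mp hx with rfl | hx'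
    · rw [part2]
    · have hxS : x ∈ S := Finset.mem_of_mem_erase hx'
      rw [defic_swap_old G u v x S hu hv hx', hdefS x hxS,
        if_pos ((part1 x hxS).symm)]
      by_cases hxu : G.Adj x u
      · rw [if_pos hxu]; norm_num
      · rw [if_neg hxu]; norm_num
  -- Part 4
  have hw' : w ∈ S.erase u := Finset.mem_erase.mpr ⟨Ne.symm huw, hw⟩
  have part4 : defic G (insert v (S.erase u)) w = 2 := by
    rw [defic_swap_old G u v w S hu hv hw', hdefS w hw,
      if_pos ((part1 w hw).symm), if_neg (fun h => hnadj h.symm)]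
    ring
  refine ⟨part1, part2, part3, by rw [part4], ?_⟩
  -- MbM part
  set T := insert v (S.erase u) with hT
  have hvS : v ∉ S.erase u := fun h => hv (Finset.mem_of_mem_erase h)
  have hTcard : T.card = S.card := by
    rw [hT, Finset.card_insert_of_notMem hvS, Finset.card_erase_of_mem hu]
    have : 1 ≤ S.card := Finset.card_pos.mpr ⟨u, hu⟩
    omega
  obtain ⟨k, hk⟩ := hodd
  have hTk : T.card = k + 1 := by rw [hTcard, hcard]; omega
  have hTle : T.card ≤ Fintype.card V := Finset.card_le_univ T
  have hwT : w ∈ T := Finset.mem_insert_of_mem hw'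
  have hdefw_nat : nbrCount G w Tᶜ < nbrCount G w T := by
    have h4 := part4
    unfold defic at h4
    rw [if_pos hwT] at h4
    omega
  have hdefT_nat : ∀ x ∈ T, nbrCount G x Tᶜ ≤ nbrCount G x T := by
    intro x hx
    have h3 := part3 x hx
    unfold defic at h3
    rw [if_pos hx] at h3
    omega
  set s₀ : V → Bool := fun x => if x ∈ T.erase w then true else false with hs₀
  set s₁ : V → Bool := fun x => if x ∈ T then true else false with hs₁
  have hs₀w : s₀ w = false := by simp [hs₀]
  have hzeros₀ : univ.filter (fun z => s₀ z = false) = (T.erase w)ᶜ := by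
    ext z
    by_cases hz : z ∈ T.erase w <;> simp [hs₀, hz] <;> tauto
  -- w is unhappy in s₀
  have hw_unhappy : Unhappy G s₀ w := by
    unfold Unhappy
    have e1 : univ.filter (fun y => G.Adj w y ∧ s₀ y = s₀ w)
        = univ.filter (fun y => G.Adj w y ∧ y ∈ (T.erase w)ᶜ) := by
      ext y
      by_cases hy : y ∈ T.erase w <;> simp [hs₀, hy, hs₀w] <;> tauto
    have e2 : univ.filter (fun y => G.Adj w y ∧ s₀ y ≠ s₀ w)
        = univ.filter (fun y => G.Adj w y ∧ y ∈ T.erase w) := by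
      ext y
      by_cases hy : y ∈ T.erase w <;> simp [hs₀, hy, hs₀w]
    rw [e1, e2, card_filter_adj, card_filter_adj, nbr_self_erase]
    have c1 : nbrCount G w ((T.erase w)ᶜ) = nbrCount G w Tᶜ := by
      rw [Finset.compl_erase,
        nbr_insert G w w _ (by simp [Finset.mem_compl, hwT]),
        if_neg (G.irrefl (v := w))]
      omega
    rw [c1]
    exact hdefw_nat
  -- the flip step s₀ → s₁
  have hflip : FlipStep G s₀ s₁ := by
    refine ⟨w, hw_unhappy, ?_⟩
    funext x
    by_cases hxw : x = w
    · subst hxw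
      rw [Function.update_self]
      simp [hs₁, hwT, hs₀w]
    · rw [Function.update_of_ne hxw]
      by_cases hxT : x ∈ T <;> simp [hs₀, hs₁, hxT, hxw]
  -- the invariant holds at s₁
  have hinv₁ : ∀ x, s₁ x = true →
      (univ.filter (fun y => G.Adj x y ∧ s₁ y = false)).card ≤
      (univ.filter (fun y => G.Adj x y ∧ s₁ y = true)).card := by
    intro x hx
    have hxT : x ∈ T := by
      by_contra h
      simp [hs₁, h] at hx
    have e1 : univ.filter (fun y => G.Adj x y ∧ s₁ y = true)
        = univ.filter (fun y => G.Adj x y ∧ y ∈ T) := by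
      ext y
      by_cases hy : y ∈ T <;> simp [hs₁, hy]
    have e2 : univ.filter (fun y => G.Adj x y ∧ s₁ y = false)
        = univ.filter (fun y => G.Adj x y ∧ y ∈ Tᶜ) := by
      ext y
      by_cases hy : y ∈ T <;> simp [hs₁, hy]
    rw [e1, e2, card_filter_adj, card_filter_adj]
    exact hdefT_nat x hxT
  obtain ⟨t, ht1, ht2, ht3⟩ := descent G (zerosCount s₁) s₁ le_rfl hinv₁
  refine ⟨s₀, ?_, t, Relation.ReflTransGen.head hflip ht1, ht2, ?_⟩
  · -- strict majority of zeros initially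
    have : zerosCount s₀ = ((T.erase w)ᶜ).card := by
      unfold zerosCount
      rw [hzeros₀]
    rw [this, Finset.card_compl, Finset.card_erase_of_mem hwT]
    omega
  · -- at most half zeros at the end
    have hsub : univ.filter (fun z => t z = false) ⊆ Tᶜ := by
      intro z hz
      simp only [Finset.mem_filter, Finset.mem_univ, true_and] at hz
      rw [Finset.mem_compl]
      intro hzT
      have hzt : t z = true := ht3 z (by simp [hs₁, hzT])
      rw [hzt] at hz
      exact absurd hz (by simp)
    have hle2 : zerosCount t ≤ Tᶜ.card := Finset.card_le_card hsub
    rw [Finset.card_compl] at hle2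
    omega
end

section
/- Let φ be a Boolean formula in 3-CNF with C clauses and V variables in which every variable occurs exactly twice positively and twice negatively (so 3C = 4V). In the variable gadget graph for a variable x (25 vertices: literal nodes x and x̄; paths v₁(x),…,v₇(x) and v₁(x̄),…,v₇(x̄); vertices v₀(x), w₀(x), and w₁(x),…,w₇(x), with edges as specified), if the initial profile assigns preference 1 exactly to w₀(x) and to the literal node x (all other gadget vertices 0), then there is a sequence of majority-dynamics updates internal to the gadget ending in a profile where exactly the 17 vertices x, v₀(x), v₁(x),…,v₇(x), w₀(x), w₁(x),…,w₇(x) have preference 1 and no gadget vertex is unhappy. -/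
open Finset

variable {V : Type*}

/-- Vertices of the variable gadget: literal nodes `lit b` (`lit true` = x,
`lit false` = x̄), path nodes `v b i` (`v b i` = v_{i+1} on the side of literal `b`,
i = 0,…,6 standing for v₁,…,v₇), and the nodes v₀, w₀ and w i (w_{i+1}, i = 0,…,6). -/
inductive GadgetV : Type
  | lit : Bool → GadgetV
  | v : Bool → Fin 7 → GadgetV
  | v0 : GadgetV
  | w0 : GadgetV
  | w : Fin 7 → GadgetV
  deriving DecidableEq, Fintype

open GadgetV

/-- Base (oriented) edge relation of the variable gadget. -/
def gRel : GadgetV → GadgetV → Bool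
  | lit b, v b' _ => b == b'                                -- (x, vᵢ(x)), i = 1,…,7
  | v b i, v b' j => b == b' && ((j : ℕ) == (i : ℕ) + 1)    -- (vᵢ, vᵢ₊₁), i = 1,…,6
  | v0, v _ i => (i : ℕ) == 6                               -- (v₀, v₇(x)), (v₀, v₇(x̄))
  | v0, w0 => true                                          -- (v₀, w₀)
  | w0, v _ _ => true                                       -- (w₀, vᵢ(x)), (w₀, vᵢ(x̄))
  | w0, w _ => true                                         -- (w₀, wᵢ)
  | _, _ => false

/-- The variable gadget graph (symmetrization of `gRel`). -/
def gadgetGraph : SimpleGraph GadgetV :=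
  SimpleGraph.fromRel (fun a b => gRel a b = true)

instance : DecidableRel gadgetGraph.Adj := fun a b =>
  decidable_of_iff (a ≠ b ∧ (gRel a b = true ∨ gRel b a = true))
    (by rw [gadgetGraph, SimpleGraph.fromRel_adj])

/-- Initial profile: preference 1 exactly on w₀ and the literal node x. -/
def gInit : GadgetV → Bool := fun a =>
  decide (a = w0) || decide (a = lit true)

/-- Target profile: preference 1 exactly on the 17 vertices
x, v₁(x),…,v₇(x), v₀, w₀, w₁,…,w₇. -/
def gFinal : GadgetV → Bool
  | lit b => b
  | v b _ => b
  | v0 => true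
  | w0 => true
  | w _ => true

instance (s : GadgetV → Bool) (x : GadgetV) : Decidable (Unhappy gadgetGraph s x) := by
  unfold Unhappy; infer_instance

instance (s : GadgetV → Bool) : Decidable (StableProf gadgetGraph s) := by
  unfold StableProf; infer_instance

/-- from the initial profile assigning preference 1 exactly to w₀(x) and
the literal node x, there is a sequence of majority-dynamics updates in the variable
gadget reaching a profile where exactly the 17 vertices x, v₀(x), v₁(x),…,v₇(x), w₀(x),
w₁(x),…,w₇(x) have preference 1 and no gadget vertex is unhappy. -/
theorem stmt19 :
    ∃ t : GadgetV → Bool,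
      ReachesProf gadgetGraph gInit t ∧
      (∀ a : GadgetV, t a = gFinal a) ∧
      StableProf gadgetGraph t := by
  refine ⟨gFinal, ?_, fun a => rfl, ?_⟩
  · show ReachesProf gadgetGraph gInit gFinal
    refine Relation.ReflTransGen.head ⟨v true 0, by decide, rfl⟩ ?_
    refine Relation.ReflTransGen.head ⟨v true 1, by decide, rfl⟩ ?_
    refine Relation.ReflTransGen.head ⟨v true 2, by decide, rfl⟩ ?_
    refine Relation.ReflTransGen.head ⟨v true 3, by decide, rfl⟩ ?_
    refine Relation.ReflTransGen.head ⟨v true 4, by decide, rfl⟩ ?_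
    refine Relation.ReflTransGen.head ⟨v true 5, by decide, rfl⟩ ?_
    refine Relation.ReflTransGen.head ⟨v true 6, by decide, rfl⟩ ?_
    refine Relation.ReflTransGen.head ⟨v0, by decide, rfl⟩ ?_
    refine Relation.ReflTransGen.head ⟨w 0, by decide, rfl⟩ ?_
    refine Relation.ReflTransGen.head ⟨w 1, by decide, rfl⟩ ?_
    refine Relation.ReflTransGen.head ⟨w 2, by decide, rfl⟩ ?_
    refine Relation.ReflTransGen.head ⟨w 3, by decide, rfl⟩ ?_
    refine Relation.ReflTransGen.head ⟨w 4, by decide, rfl⟩ ?_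
    refine Relation.ReflTransGen.head ⟨w 5, by decide, rfl⟩ ?_
    exact Relation.ReflTransGen.single ⟨w 6, by decide, by funext a; revert a; decide⟩
  · decide
end
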